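/- arXiv:2410.05542 — 9 statements merged into one kernel-verified Lean document; each statement's English description precedes it below -/
import Mathlib

section
/- For every k ∈ ℤ, the proportion of Lipschitz functions with zero boundary condition on 𝕋_d^n whose value at the root is k equals the k-th coordinate of the n-fold iterate of F applied to δ_0; that is, |{h ∈ L_n : h(ρ) = k}| / |L_n| = F^{(n)}(δ_0)_k. -/
open Filter Topology

/-- Vertices of the `d`-ary tree of height `n`: strings over `{0,…,d-1}` of length `≤ n`. -/
def TreeVert (d n : ℕ) := {l : List (Fin d) // l.length ≤ n}

/-- The child `s·i` of a vertex `s` of length `< n`. -/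
def childVert {d n : ℕ} (s : TreeVert d n) (hs : s.val.length < n) (i : Fin d) :
    TreeVert d n :=
  ⟨s.val ++ [i], by simp; omega⟩

/-- Lipschitz functions with zero boundary conditions on the `d`-ary tree of height `n`. -/
def LipTree (d n : ℕ) : Set (TreeVert d n → ℤ) :=
  {h | (∀ (s : TreeVert d n) (hs : s.val.length < n) (i : Fin d),
          |h s - h (childVert s hs i)| ≤ 1) ∧
        ∀ s : TreeVert d n, s.val.length = n → h s = 0}

/-- The root (empty string). -/
def rootVert (d n : ℕ) : TreeVert d n := ⟨[], by simp⟩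

noncomputable def Aop (d : ℕ) (z : ℤ → ℝ) : ℤ → ℝ :=
  fun i => (z (i - 1) + z i + z (i + 1)) ^ d

noncomputable def Fop (d : ℕ) (z : ℤ → ℝ) : ℤ → ℝ :=
  fun i => Aop d z i / ∑' j : ℤ, Aop d z j

noncomputable def delta0 : ℤ → ℝ := fun i => if i = 0 then 1 else 0

/-!
Deleting the root splits `𝕋_d^{n+1}` into `d` copies of `𝕋_d^n`, so a Lipschitz function with
root value `k` is the same as a `d`-tuple of Lipschitz functions on `𝕋_d^n` with root values in
`{k-1, k, k+1}`. Hence the counts `Z_n(k) = |{h ∈ L_n : h(ρ) = k}|` satisfy `Z_0 = δ_0` and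
`Z_{n+1} = A(Z_n)`. As `F` is invariant under positive rescaling,
`F^{(n)}(δ_0) = Z_n / Σ_k Z_n(k)`.
-/

section Fibers

variable {α β : Type*} (p : α → Prop) (f : α → β)

def subtypeAndMemEquivSigma (S : Set β) :
    {a // p a ∧ f a ∈ S} ≃ Σ b : S, {a // p a ∧ f a = b} where
  toFun a := ⟨⟨f a, a.2.2⟩, a.1, a.2.1, rfl⟩
  invFun x := ⟨x.2.1, x.2.2.1, by rw [x.2.2.2]; exact x.1.2⟩
  left_inv _ := rfl
  right_inv x := Sigma.subtype_ext (Subtype.ext x.2.2.2) rfl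

theorem card_subtype_and_mem_eq_sum (S : Finset β) [∀ b, Finite {a // p a ∧ f a = b}] :
    Nat.card {a // p a ∧ f a ∈ S} = ∑ b ∈ S, Nat.card {a // p a ∧ f a = b} := by
  rw [← Finset.sum_coe_sort, ← Nat.card_sigma]
  exact Nat.card_congr (subtypeAndMemEquivSigma p f S)

end Fibers

namespace TreeVert

variable {d n : ℕ}

def cons (i : Fin d) (s : TreeVert d n) : TreeVert d (n + 1) :=
  ⟨i :: s.val, by simpa using s.prop⟩

def glue (k : ℤ) (g : Fin d → TreeVert d n → ℤ) : TreeVert d (n + 1) → ℤ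
  | ⟨[], _⟩ => k
  | ⟨i :: t, ht⟩ => g i ⟨t, Nat.le_of_succ_le_succ ht⟩

end TreeVert

namespace LipTree

variable {d n : ℕ}

theorem zero_mem : (0 : TreeVert d n → ℤ) ∈ LipTree d n :=
  ⟨fun _ _ _ => by simp, fun _ _ => rfl⟩

theorem eq_zero_of_height_zero {h : TreeVert d 0 → ℤ} (hh : h ∈ LipTree d 0) : h = 0 :=
  funext fun s => hh.2 s (Nat.le_zero.mp s.prop)

theorem comp_cons {h : TreeVert d (n + 1) → ℤ} (hh : h ∈ LipTree d (n + 1)) (i : Fin d) :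
    h ∘ TreeVert.cons i ∈ LipTree d n :=
  ⟨fun s hs j => hh.1 (TreeVert.cons i s) (by simpa [TreeVert.cons] using hs) j,
    fun s hs => hh.2 (TreeVert.cons i s) (by simp [TreeVert.cons, hs])⟩

theorem abs_root_sub_cons_root_le {h : TreeVert d (n + 1) → ℤ} (hh : h ∈ LipTree d (n + 1))
    (i : Fin d) : |h (rootVert d (n + 1)) - h (TreeVert.cons i (rootVert d n))| ≤ 1 :=
  hh.1 (rootVert d (n + 1)) (by simp [rootVert]) i

theorem glue_mem {k : ℤ} {g : Fin d → TreeVert d n → ℤ} (hg : ∀ i, g i ∈ LipTree d n)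
    (hk : ∀ i, |g i (rootVert d n) - k| ≤ 1) : TreeVert.glue k g ∈ LipTree d (n + 1) := by
  refine ⟨?_, ?_⟩
  · rintro ⟨_ | ⟨i, t⟩, ht⟩ hs j
    · rw [abs_sub_comm]
      exact hk j
    · exact (hg i).1 ⟨t, Nat.le_of_succ_le_succ ht⟩ (by simpa using hs) j
  · rintro ⟨_ | ⟨i, t⟩, ht⟩ hs
    · simp at hs
    · exact (hg i).2 ⟨t, Nat.le_of_succ_le_succ ht⟩ (by simpa using hs)

end LipTree

def lipRootSuccEquiv (d n : ℕ) (k : ℤ) :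
    {h // h ∈ LipTree d (n + 1) ∧ h (rootVert d (n + 1)) = k} ≃
      (Fin d → {g // g ∈ LipTree d n ∧ g (rootVert d n) ∈ Finset.Icc (k - 1) (k + 1)}) where
  toFun h i := ⟨h.1 ∘ TreeVert.cons i, LipTree.comp_cons h.2.1 i, by
    have := LipTree.abs_root_sub_cons_root_le h.2.1 i
    rw [h.2.2, abs_le] at this
    rw [Finset.mem_Icc]
    constructor <;> simp only [Function.comp_apply] <;> omega⟩
  invFun g := ⟨TreeVert.glue k fun i => (g i).1, LipTree.glue_mem (fun i => (g i).2.1) fun i => by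
    have := Finset.mem_Icc.mp (g i).2.2
    rw [abs_le]
    constructor <;> omega, rfl⟩
  left_inv h := by
    ext ⟨_ | ⟨i, t⟩, ht⟩
    · exact h.2.2.symm
    · rfl
  right_inv g := rfl

noncomputable def lipCount (d n : ℕ) (k : ℤ) : ℕ :=
  Nat.card {h // h ∈ LipTree d n ∧ h (rootVert d n) = k}

instance instFiniteLipTreeRootEq (d n : ℕ) (k : ℤ) :
    Finite {h // h ∈ LipTree d n ∧ h (rootVert d n) = k} := by
  induction n generalizing k with
  | zero =>
    have : Subsingleton {h // h ∈ LipTree d 0 ∧ h (rootVert d 0) = k} :=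
      ⟨fun h h' => Subtype.ext <| (LipTree.eq_zero_of_height_zero h.2.1).trans
        (LipTree.eq_zero_of_height_zero h'.2.1).symm⟩
    infer_instance
  | succ n ih =>
    have (j : ℤ) :
        Finite {g // g ∈ LipTree d n ∧ g (rootVert d n) ∈ Finset.Icc (j - 1) (j + 1)} :=
      Finite.of_equiv _ (subtypeAndMemEquivSigma _ _ _).symm
    exact Finite.of_equiv _ (lipRootSuccEquiv d n k).symm

theorem lipCount_zero (d : ℕ) (k : ℤ) : lipCount d 0 k = if k = 0 then 1 else 0 := by
  split_ifs with hk
  · subst hk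
    exact Nat.card_eq_one_iff_exists.mpr ⟨⟨0, LipTree.zero_mem, rfl⟩,
      fun h => Subtype.ext (LipTree.eq_zero_of_height_zero h.2.1)⟩
  · have : IsEmpty {h // h ∈ LipTree d 0 ∧ h (rootVert d 0) = k} :=
      ⟨fun h => hk (by rw [← h.2.2, LipTree.eq_zero_of_height_zero h.2.1]; rfl)⟩
    exact Nat.card_of_isEmpty

theorem lipCount_succ (d n : ℕ) (k : ℤ) :
    lipCount d (n + 1) k = (lipCount d n (k - 1) + lipCount d n k + lipCount d n (k + 1)) ^ d := by
  have hIcc : Finset.Icc (k - 1) (k + 1) = {k - 1, k, k + 1} := by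
    ext j
    simp only [Finset.mem_Icc, Finset.mem_insert, Finset.mem_singleton]
    omega
  rw [lipCount, Nat.card_congr (lipRootSuccEquiv d n k), Nat.card_fun, Nat.card_fin,
    card_subtype_and_mem_eq_sum, hIcc,
    Finset.sum_insert (by simp only [Finset.mem_insert, Finset.mem_singleton]; omega),
    Finset.sum_pair (by omega)]
  simp only [lipCount, add_assoc]

theorem lipCount_zero_pos (d n : ℕ) : 0 < lipCount d n 0 :=
  have : Nonempty {h // h ∈ LipTree d n ∧ h (rootVert d n) = 0} :=
    ⟨⟨0, LipTree.zero_mem, rfl⟩⟩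
  Nat.card_pos

theorem lipCount_eq_zero_of_lt_abs {d : ℕ} (hd : d ≠ 0) {n : ℕ} {k : ℤ} (hk : n < |k|) :
    lipCount d n k = 0 := by
  induction n generalizing k with
  | zero => simp_all [lipCount_zero]
  | succ n ih =>
    rw [lt_abs] at hk
    rw [lipCount_succ, ih (k := k - 1) (by rw [lt_abs]; omega), ih (k := k) (by rw [lt_abs]; omega),
      ih (k := k + 1) (by rw [lt_abs]; omega)]
    exact zero_pow hd

theorem LipTree.abs_root_le {d n : ℕ} (hd : d ≠ 0) {h : TreeVert d n → ℤ}
    (hh : h ∈ LipTree d n) : |h (rootVert d n)| ≤ n := by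
  by_contra! hlt
  have : Nonempty {g // g ∈ LipTree d n ∧ g (rootVert d n) = h (rootVert d n)} :=
    ⟨⟨h, hh, rfl⟩⟩
  exact (Nat.card_pos (α := {g // _})).ne' (lipCount_eq_zero_of_lt_abs hd hlt)

theorem card_lipTree {d : ℕ} (hd : d ≠ 0) (n : ℕ) :
    Nat.card {h // h ∈ LipTree d n} = ∑ k ∈ Finset.Icc (-n : ℤ) n, lipCount d n k := by
  refine (Nat.card_congr (Equiv.subtypeEquivRight fun h => ?_)).trans
    (card_subtype_and_mem_eq_sum (· ∈ LipTree d n) (· (rootVert d n)) _)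
  exact (and_iff_left_of_imp fun hh =>
    Finset.mem_Icc.mpr (abs_le.mp (LipTree.abs_root_le hd hh))).symm

theorem Aop_const_mul (d : ℕ) (c : ℝ) (z : ℤ → ℝ) :
    Aop d (fun i => c * z i) = fun i => c ^ d * Aop d z i := by
  funext i
  simp only [Aop, ← mul_add, mul_pow]

theorem Fop_const_mul (d : ℕ) {c : ℝ} (hc : c ≠ 0) (z : ℤ → ℝ) :
    Fop d (fun i => c * z i) = Fop d z := by
  funext i
  simp only [Fop, Aop_const_mul, tsum_mul_left]
  exact mul_div_mul_left _ _ (pow_ne_zero d hc)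

theorem Aop_lipCount (d n : ℕ) :
    Aop d (fun k => (lipCount d n k : ℝ)) = fun k => (lipCount d (n + 1) k : ℝ) := by
  funext k
  simp only [Aop, lipCount_succ]
  push_cast
  rfl

theorem card_lipTree_eq_tsum {d : ℕ} (hd : d ≠ 0) (n : ℕ) :
    (Nat.card {h // h ∈ LipTree d n} : ℝ) = ∑' k, (lipCount d n k : ℝ) := by
  rw [card_lipTree hd, Nat.cast_sum]
  refine (tsum_eq_sum fun k hk => ?_).symm
  rw [lipCount_eq_zero_of_lt_abs hd, Nat.cast_zero]
  rw [Finset.mem_Icc, not_and_or, not_le, not_le] at hk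
  rw [lt_abs]
  omega

theorem card_lipTree_pos {d : ℕ} (hd : d ≠ 0) (n : ℕ) :
    0 < Nat.card {h // h ∈ LipTree d n} := by
  rw [card_lipTree hd]
  exact (lipCount_zero_pos d n).trans_le
    (Finset.single_le_sum (fun _ _ => Nat.zero_le _) (by simp))

theorem Fop_iterate_delta0 {d : ℕ} (hd : d ≠ 0) (n : ℕ) :
    (Fop d)^[n] delta0 = fun k => (lipCount d n k : ℝ) / Nat.card {h // h ∈ LipTree d n} := by
  induction n with
  | zero =>
    funext k
    rw [card_lipTree hd]
    simp [lipCount_zero, delta0]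
  | succ n ih =>
    have hN : (Nat.card {h // h ∈ LipTree d n} : ℝ)⁻¹ ≠ 0 :=
      inv_ne_zero (Nat.cast_ne_zero.mpr (card_lipTree_pos hd n).ne')
    simp only [Function.iterate_succ_apply', ih, div_eq_inv_mul, Fop_const_mul d hN]
    funext k
    rw [Fop, Aop_lipCount, card_lipTree_eq_tsum hd, inv_mul_eq_div]

theorem stmt_2 (d n : ℕ) (hd : 2 ≤ d) (k : ℤ) :
    (Nat.card {h : TreeVert d n → ℤ // h ∈ LipTree d n ∧ h (rootVert d n) = k} : ℝ) /
      (Nat.card {h : TreeVert d n → ℤ // h ∈ LipTree d n} : ℝ) =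
      (Fop d)^[n] delta0 k := by
  rw [Fop_iterate_delta0 (by omega)]
  rfl
end

section
/- Let d ≥ 2 be an integer and let a, b, c ∈ [0,1] satisfy a ≤ b and c ≤ b, and set (a', b', c') := φ(a, b, c). Then for every x ∈ S_{a,b,c}: a' ≤ ψ(x)_1 ≤ b' and ψ(x)_n ≤ c' for every n ≥ 2; that is, ψ maps S_{a,b,c} into S_{a',b',c'}. -/
/-- The map `ψ` on sequences of nonnegative reals (indices `n ≥ 1` are meaningful;
coordinate `0` is set to `0`). -/
noncomputable def psi (d : ℕ) (x : ℕ → ℝ) : ℕ → ℝ := fun n =>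
  if n = 0 then 0
  else if n = 1 then ((1 + x 1 + x 1 * x 2) / (1 + 2 * x 1)) ^ d
  else x (n - 1) ^ d *
    ((1 + x n + x n * x (n + 1)) / (1 + x (n - 1) + x (n - 1) * x n)) ^ d

/-- The set `S_{a,b,c}`. -/
def Sabc (a b c : ℝ) : Set (ℕ → ℝ) :=
  {x | (∀ n, 1 ≤ n → 0 ≤ x n) ∧ a ≤ x 1 ∧ x 1 ≤ b ∧ ∀ n, 2 ≤ n → x n ≤ c}

noncomputable def fMap (d : ℕ) (α x : ℝ) : ℝ := ((1 + α * x) / (1 + 2 * x)) ^ d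

noncomputable def gMap (d : ℕ) (b x : ℝ) : ℝ :=
  b ^ d * ((1 + x + x ^ 2) / (1 + b + b * x)) ^ d

/-- `φ(a,b,c) = (f(1,b), f(1+c,a), g(b,c))`. -/
noncomputable def phiMap (d : ℕ) (a b c : ℝ) : ℝ × ℝ × ℝ :=
  (fMap d 1 b, fMap d (1 + c) a, gMap d b c)

lemma key_lemma (b c t u v : ℝ) (hcb : c ≤ b) (hc0 : 0 ≤ c)
    (ht0 : 0 ≤ t) (htb : t ≤ b) (hu0 : 0 ≤ u) (huc : u ≤ c) (hvc : v ≤ c) :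
    t * ((1+u+u*v) / (1+t+t*u)) ≤ b * ((1+c+c^2) / (1+b+b*c)) := by
  have hb0 : 0 ≤ b := le_trans hc0 hcb
  rw [mul_div_assoc', mul_div_assoc',
    div_le_div_iff₀ (by nlinarith [mul_nonneg ht0 hu0]) (by nlinarith [mul_nonneg hb0 hc0])]
  nlinarith [mul_nonneg (mul_nonneg ht0 hu0) (sub_nonneg.2 hvc),
    mul_nonneg (mul_nonneg (mul_nonneg ht0 hu0) (sub_nonneg.2 hvc)) hb0,
    mul_nonneg (mul_nonneg (mul_nonneg (mul_nonneg ht0 hu0) (sub_nonneg.2 hvc)) hb0) hc0,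
    mul_nonneg (sub_nonneg.2 htb) (mul_nonneg hu0 hc0),
    mul_nonneg (sub_nonneg.2 htb) hu0,
    mul_nonneg (sub_nonneg.2 htb) (mul_nonneg (mul_nonneg hu0 hu0) hc0),
    mul_nonneg (mul_nonneg hb0 (sub_nonneg.2 huc)) hc0,
    mul_nonneg (mul_nonneg (mul_nonneg hb0 (sub_nonneg.2 huc)) hc0) hb0,
    mul_nonneg (mul_nonneg hb0 (sub_nonneg.2 huc)) hb0,
    mul_nonneg hb0 (sub_nonneg.2 huc), sub_nonneg.2 htb]

theorem stmt_3 (d : ℕ) (hd : 2 ≤ d) (a b c : ℝ)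
    (ha : a ∈ Set.Icc (0 : ℝ) 1) (hb : b ∈ Set.Icc (0 : ℝ) 1)
    (hc : c ∈ Set.Icc (0 : ℝ) 1) (hab : a ≤ b) (hcb : c ≤ b)
    (x : ℕ → ℝ) (hx : x ∈ Sabc a b c) :
    (phiMap d a b c).1 ≤ psi d x 1 ∧ psi d x 1 ≤ (phiMap d a b c).2.1 ∧
      (∀ n, 2 ≤ n → psi d x n ≤ (phiMap d a b c).2.2) ∧
      psi d x ∈ Sabc (phiMap d a b c).1 (phiMap d a b c).2.1 (phiMap d a b c).2.2 := by
  obtain ⟨hxn, hax1, hx1b, hxc⟩ := hx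
  obtain ⟨ha0, ha1⟩ := ha
  obtain ⟨hb0, hb1⟩ := hb
  obtain ⟨hc0, hc1⟩ := hc
  have hx1 : 0 ≤ x 1 := hxn 1 le_rfl
  have hx2 : 0 ≤ x 2 := hxn 2 (by norm_num)
  have hx2c : x 2 ≤ c := hxc 2 le_rfl
  -- lower bound for psi 1
  have hlow : (phiMap d a b c).1 ≤ psi d x 1 := by
    simp only [phiMap, fMap, psi, if_neg one_ne_zero, if_pos rfl, one_mul]
    apply pow_le_pow_left₀ (div_nonneg (by linarith) (by linarith))
    rw [div_le_div_iff₀ (by linarith) (by linarith)]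
    nlinarith [mul_nonneg hx1 hx2, mul_nonneg (mul_nonneg hb0 hx1) hx2]
  have hup : psi d x 1 ≤ (phiMap d a b c).2.1 := by
    simp only [phiMap, fMap, psi, if_neg one_ne_zero, if_pos rfl]
    apply pow_le_pow_left₀ (div_nonneg (by nlinarith [mul_nonneg hx1 hx2]) (by linarith))
    rw [div_le_div_iff₀ (by linarith) (by linarith)]
    nlinarith [mul_nonneg (sub_nonneg.2 hax1) (sub_nonneg.2 hc1),
      mul_nonneg hx1 (sub_nonneg.2 hx2c),
      mul_nonneg (mul_nonneg ha0 hx1) (sub_nonneg.2 hx2c)]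
  have hg : ∀ n, 2 ≤ n → psi d x n ≤ (phiMap d a b c).2.2 := by
    intro n hn
    obtain ⟨m, rfl⟩ := Nat.exists_eq_add_of_le hn
    have e1 : 2 + m - 1 = m + 1 := by omega
    have e2 : 2 + m + 1 = m + 3 := by omega
    simp only [psi, if_neg (by omega : ¬ 2 + m = 0), if_neg (by omega : ¬ 2 + m = 1), e1, e2,
      phiMap, gMap]
    set t := x (m+1); set u := x (2+m); set v := x (m+3)
    have ht0 : 0 ≤ t := hxn _ (by omega)
    have hu0 : 0 ≤ u := hxn _ (by omega)
    have huc : u ≤ c := hxc _ (by omega)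
    have hvc : v ≤ c := hxc _ (by omega)
    have htb : t ≤ b := by
      rcases Nat.eq_zero_or_pos m with hm | hm
      · subst hm; exact hx1b
      · exact le_trans (hxc _ (by omega)) hcb
    rw [← mul_pow, ← mul_pow]
    apply pow_le_pow_left₀ (mul_nonneg ht0 (div_nonneg (by nlinarith [mul_nonneg hu0 (hxn (m+3) (by omega))]) (by nlinarith [mul_nonneg ht0 hu0])))
    exact key_lemma b c t u v hcb hc0 ht0 htb hu0 huc hvc
  refine ⟨hlow, hup, hg, ?_, hlow, hup, hg⟩
  intro n hn
  rcases Nat.lt_or_ge n 2 with h2 | h2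
  · interval_cases n
    simp only [psi, if_neg one_ne_zero, if_pos rfl]
    exact pow_nonneg (div_nonneg (by nlinarith [mul_nonneg hx1 hx2]) (by linarith)) d
  · obtain ⟨m, rfl⟩ := Nat.exists_eq_add_of_le h2
    have e1 : 2 + m - 1 = m + 1 := by omega
    simp only [psi, if_neg (by omega : ¬ 2 + m = 0), if_neg (by omega : ¬ 2 + m = 1), e1]
    have ht0 : 0 ≤ x (m+1) := hxn _ (by omega)
    have hu0 : 0 ≤ x (2+m) := hxn _ (by omega)
    have hw0 : 0 ≤ x (2+m+1) := hxn _ (by omega)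
    have h2m : (2+m : ℕ) = m+2 := by omega
    rw [h2m] at hu0
    apply mul_nonneg (pow_nonneg ht0 d)
    apply pow_nonneg
    apply div_nonneg
    · rw [h2m] at hw0 ⊢; nlinarith [mul_nonneg hu0 hw0]
    · rw [h2m]; nlinarith [mul_nonneg ht0 hu0]
end

section
/- Fix an integer d ≥ 8. Then: (i) for every x ∈ S_{2/5, 1, 1/100}, ψ(ψ(x)) ∈ S_{2/5, 1, 1/100}; and (ii) every x ∈ S_{2/5, 1, 1/100} satisfies ψ(x)_1 ≤ (39/50)^d, and since (39/50)^d < 2/5 for d ≥ 8 this implies ψ(S_{2/5,1,1/100}) is disjoint from S_{2/5, 1, 1}. -/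
lemma psi_one (d : ℕ) (x : ℕ → ℝ) :
    psi d x 1 = ((1 + x 1 + x 1 * x 2) / (1 + 2 * x 1)) ^ d := by
  simp [psi]

lemma psi_ge_two (d : ℕ) (x : ℕ → ℝ) (n : ℕ) (hn : 2 ≤ n) :
    psi d x n = (x (n - 1) *
      ((1 + x n + x n * x (n + 1)) / (1 + x (n - 1) + x (n - 1) * x n))) ^ d := by
  have h0 : n ≠ 0 := by omega
  have h1 : n ≠ 1 := by omega
  simp [psi, h0, h1, mul_pow]

lemma psi_nonneg (d : ℕ) (x : ℕ → ℝ) (hx : ∀ n, 1 ≤ n → 0 ≤ x n) :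
    ∀ n, 1 ≤ n → 0 ≤ psi d x n := by
  intro n hn
  have h1 := hx 1 le_rfl
  have h2 := hx 2 (by norm_num)
  rcases eq_or_lt_of_le hn with h | h
  · rw [← h, psi_one]
    apply pow_nonneg
    apply div_nonneg
    · nlinarith [mul_nonneg h1 h2]
    · linarith
  · have hn2 : 2 ≤ n := h
    rw [psi_ge_two d x n hn2]
    have ha := hx (n - 1) (by omega)
    have hb := hx n (by omega)
    have hc := hx (n + 1) (by omega)
    apply pow_nonneg
    apply mul_nonneg ha
    apply div_nonneg
    · nlinarith [mul_nonneg hb hc]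
    · nlinarith [mul_nonneg ha hb]

lemma tail_bound : ∀ d : ℕ, 13 ≤ d → (d : ℝ) * ((39 : ℝ) / 50) ^ d ≤ 3 / 5 := by
  intro d hd
  induction d, hd using Nat.le_induction with
  | base => norm_num
  | succ n hn ih =>
    have ht : (0 : ℝ) ≤ ((39 : ℝ) / 50) ^ n := by positivity
    have h1 : ((n : ℝ) + 1) * (39 / 50) ≤ (n : ℝ) := by
      have : (13 : ℝ) ≤ (n : ℝ) := by exact_mod_cast hn
      nlinarith
    have : ((n : ℝ) + 1) * ((39 : ℝ) / 50) ^ (n + 1)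
        = (((n : ℝ) + 1) * (39 / 50)) * ((39 : ℝ) / 50) ^ n := by ring
    push_cast
    rw [this]
    calc (((n : ℝ) + 1) * (39 / 50)) * ((39 : ℝ) / 50) ^ n
        ≤ (n : ℝ) * ((39 : ℝ) / 50) ^ n := by
          apply mul_le_mul_of_nonneg_right h1 ht
      _ ≤ 3 / 5 := ih

lemma key_ineq (d : ℕ) (hd : 8 ≤ d) :
    (2 : ℝ) / 5 ≤ ((1 + ((39 : ℝ) / 50) ^ d) / (1 + 2 * ((39 : ℝ) / 50) ^ d)) ^ d := by
  by_cases h : d ≤ 12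
  · interval_cases d <;> norm_num
  · have h13 : 13 ≤ d := by omega
    have ht0 : (0 : ℝ) ≤ ((39 : ℝ) / 50) ^ d := by positivity
    have ht1 : ((39 : ℝ) / 50) ^ d ≤ 1 := pow_le_one₀ (by norm_num) (by norm_num)
    set t : ℝ := ((39 : ℝ) / 50) ^ d with htdef
    have hden : (0 : ℝ) < 1 + 2 * t := by linarith
    have hb : 1 - t ≤ (1 + t) / (1 + 2 * t) := by
      rw [le_div_iff₀ hden]; nlinarith
    have hb0 : (0 : ℝ) ≤ 1 - t := by linarith
    have hbern : 1 - (d : ℝ) * t ≤ (1 - t) ^ d := by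
      have := one_add_mul_le_pow (a := -t) (by linarith) d
      calc 1 - (d : ℝ) * t = 1 + (d : ℝ) * (-t) := by ring
        _ ≤ (1 + -t) ^ d := this
        _ = (1 - t) ^ d := by ring_nf
    have htail := tail_bound d h13
    calc (2 : ℝ) / 5 ≤ 1 - (d : ℝ) * t := by linarith
      _ ≤ (1 - t) ^ d := hbern
      _ ≤ ((1 + t) / (1 + 2 * t)) ^ d := pow_le_pow_left₀ hb0 hb d

lemma mem_Sabc_iff (a b c : ℝ) (x : ℕ → ℝ) :
    x ∈ Sabc a b c ↔
      (∀ n, 1 ≤ n → 0 ≤ x n) ∧ a ≤ x 1 ∧ x 1 ≤ b ∧ ∀ n, 2 ≤ n → x n ≤ c := Iff.rfl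

/-- The basic bound for the first coordinate. -/
lemma psi_one_le (d : ℕ) (x : ℕ → ℝ) (hx : x ∈ Sabc (2 / 5) 1 (1 / 100)) :
    psi d x 1 ≤ ((39 : ℝ) / 50) ^ d := by
  obtain ⟨hnn, h1l, h1u, hc⟩ := hx
  have h1 := hnn 1 le_rfl
  have h2 := hnn 2 (by norm_num)
  have h2u := hc 2 le_rfl
  rw [psi_one]
  apply pow_le_pow_left₀
  · apply div_nonneg
    · nlinarith [mul_nonneg h1 h2]
    · linarith
  · rw [div_le_iff₀ (by linarith)]
    nlinarith [mul_le_mul_of_nonneg_left h2u h1]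

/-- Properties of `ψ x` for `x ∈ S`. -/
lemma psi_props (d : ℕ) (hd : 8 ≤ d) (x : ℕ → ℝ) (hx : x ∈ Sabc (2 / 5) 1 (1 / 100)) :
    (∀ n, 1 ≤ n → 0 ≤ psi d x n) ∧
    psi d x 1 ≤ ((39 : ℝ) / 50) ^ d ∧
    (∀ n, 2 ≤ n → psi d x n ≤ 1 / 200) := by
  obtain ⟨hnn, h1l, h1u, hc⟩ := hx
  refine ⟨psi_nonneg d x hnn, psi_one_le d x ⟨hnn, h1l, h1u, hc⟩, ?_⟩
  intro n hn
  rw [psi_ge_two d x n hn]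
  have ha := hnn (n - 1) (by omega)
  have hb := hnn n (by omega)
  have hcn := hnn (n + 1) (by omega)
  have hbu := hc n (by omega)
  have hcu := hc (n + 1) (by omega)
  have hbase : x (n - 1) * ((1 + x n + x n * x (n + 1)) /
      (1 + x (n - 1) + x (n - 1) * x n)) ≤ 51 / 100 := by
    have hD : (0 : ℝ) < 1 + x (n - 1) + x (n - 1) * x n := by
      nlinarith [mul_nonneg ha hb]
    rw [mul_div_assoc', div_le_iff₀ hD]
    rcases Nat.lt_or_ge n 3 with h3 | h3
    · -- n = 2
      have hn2 : n = 2 := by omega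
      subst hn2
      simp only [Nat.sub_self, show (2 : ℕ) - 1 = 1 from rfl] at *
      have hbc : x 2 * x 3 ≤ (1 / 100) * (1 / 100) :=
        mul_le_mul hbu hcu (hnn 3 (by norm_num)) (by norm_num)
      nlinarith [h1u, mul_le_mul_of_nonneg_left hbu (hnn 1 le_rfl),
        mul_le_mul_of_nonneg_left hbc (hnn 1 le_rfl),
        mul_nonneg (hnn 1 le_rfl) hb]
    · -- n ≥ 3
      have hau := hc (n - 1) (by omega)
      have hbc : x n * x (n + 1) ≤ (1 / 100) * (1 / 100) :=
        mul_le_mul hbu hcu hcn (by norm_num)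
      nlinarith [mul_le_mul_of_nonneg_left hbu ha,
        mul_le_mul_of_nonneg_left hbc ha,
        mul_nonneg ha hb]
  have hbase0 : 0 ≤ x (n - 1) * ((1 + x n + x n * x (n + 1)) /
      (1 + x (n - 1) + x (n - 1) * x n)) := by
    apply mul_nonneg ha
    apply div_nonneg
    · nlinarith [mul_nonneg hb hcn]
    · nlinarith [mul_nonneg ha hb]
  calc (x (n - 1) * ((1 + x n + x n * x (n + 1)) /
        (1 + x (n - 1) + x (n - 1) * x n))) ^ d
      ≤ ((51 : ℝ) / 100) ^ d := pow_le_pow_left₀ hbase0 hbase d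
    _ ≤ ((51 : ℝ) / 100) ^ 8 := pow_le_pow_of_le_one (by norm_num) (by norm_num) hd
    _ ≤ 1 / 200 := by norm_num

theorem stmt_5 (d : ℕ) (hd : 8 ≤ d) :
    (∀ x ∈ Sabc (2 / 5) 1 (1 / 100), psi d (psi d x) ∈ Sabc (2 / 5) 1 (1 / 100)) ∧
    (∀ x ∈ Sabc (2 / 5) 1 (1 / 100), psi d x 1 ≤ (39 / 50 : ℝ) ^ d) ∧
    ((39 / 50 : ℝ) ^ d < 2 / 5) ∧
    (∀ x ∈ Sabc (2 / 5) 1 (1 / 100), psi d x ∉ Sabc (2 / 5) 1 1) := by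
  have hpow : ((39 : ℝ) / 50) ^ d < 2 / 5 := by
    calc ((39 : ℝ) / 50) ^ d ≤ ((39 : ℝ) / 50) ^ 8 :=
          pow_le_pow_of_le_one (by norm_num) (by norm_num) hd
      _ < 2 / 5 := by norm_num
  have main : ∀ x ∈ Sabc (2 / 5) 1 (1 / 100),
      psi d (psi d x) ∈ Sabc (2 / 5) 1 (1 / 100) := by
    intro x hx
    obtain ⟨hynn, hy1, hyc⟩ := psi_props d hd x hx
    set y := psi d x with hydef
    have hy1nn := hynn 1 le_rfl
    have hy2nn := hynn 2 (by norm_num)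
    have hy2 := hyc 2 le_rfl
    have hy1u14 : y 1 ≤ 14 / 100 := by
      calc y 1 ≤ ((39 : ℝ) / 50) ^ d := hy1
        _ ≤ ((39 : ℝ) / 50) ^ 8 := pow_le_pow_of_le_one (by norm_num) (by norm_num) hd
        _ ≤ 14 / 100 := by norm_num
    refine ⟨psi_nonneg d y hynn, ?_, ?_, ?_⟩
    · -- 2/5 ≤ ψ(y) 1
      rw [psi_one]
      set t : ℝ := ((39 : ℝ) / 50) ^ d with htdef
      have ht0 : (0 : ℝ) ≤ t := by positivity
      have ht1 : t ≤ 1 := pow_le_one₀ (by norm_num) (by norm_num)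
      have hdent : (0 : ℝ) < 1 + 2 * t := by linarith
      have hdeny : (0 : ℝ) < 1 + 2 * y 1 := by linarith
      have hratio : (1 + t) / (1 + 2 * t) ≤
          (1 + y 1 + y 1 * y 2) / (1 + 2 * y 1) := by
        rw [div_le_div_iff₀ hdent hdeny]
        nlinarith [mul_nonneg hy1nn hy2nn, mul_nonneg (mul_nonneg hy1nn hy2nn) ht0]
      have hr0 : (0 : ℝ) ≤ (1 + t) / (1 + 2 * t) := by positivity
      calc (2 : ℝ) / 5 ≤ ((1 + t) / (1 + 2 * t)) ^ d := key_ineq d hd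
        _ ≤ ((1 + y 1 + y 1 * y 2) / (1 + 2 * y 1)) ^ d :=
            pow_le_pow_left₀ hr0 hratio d
    · -- ψ(y) 1 ≤ 1
      rw [psi_one]
      apply pow_le_one₀
      · apply div_nonneg
        · nlinarith [mul_nonneg hy1nn hy2nn]
        · linarith
      · rw [div_le_one (by linarith)]
        nlinarith [mul_le_mul_of_nonneg_left hy2 hy1nn]
    · -- coordinates ≥ 2 are ≤ 1/100
      intro n hn
      rw [psi_ge_two d y n hn]
      have ha := hynn (n - 1) (by omega)
      have hb := hynn n (by omega)
      have hcn := hynn (n + 1) (by omega)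
      have hbu := hyc n (by omega)
      have hcu := hyc (n + 1) (by omega)
      have hau : y (n - 1) ≤ 14 / 100 := by
        rcases Nat.lt_or_ge n 3 with h3 | h3
        · have : n = 2 := by omega
          rw [this]; exact hy1u14
        · calc y (n - 1) ≤ 1 / 200 := hyc (n - 1) (by omega)
            _ ≤ 14 / 100 := by norm_num
      have hD : (0 : ℝ) < 1 + y (n - 1) + y (n - 1) * y n := by
        nlinarith [mul_nonneg ha hb]
      have hbase : y (n - 1) * ((1 + y n + y n * y (n + 1)) /
          (1 + y (n - 1) + y (n - 1) * y n)) ≤ 15 / 100 := by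
        rw [mul_div_assoc', div_le_iff₀ hD]
        have hbc : y n * y (n + 1) ≤ (1 / 200) * (1 / 200) :=
          mul_le_mul hbu hcu hcn (by norm_num)
        nlinarith [mul_le_mul_of_nonneg_left hbu ha,
          mul_le_mul_of_nonneg_left hbc ha,
          mul_nonneg ha hb]
      have hbase0 : 0 ≤ y (n - 1) * ((1 + y n + y n * y (n + 1)) /
          (1 + y (n - 1) + y (n - 1) * y n)) := by
        apply mul_nonneg ha
        apply div_nonneg
        · nlinarith [mul_nonneg hb hcn]
        · linarith
      calc (y (n - 1) * ((1 + y n + y n * y (n + 1)) /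
            (1 + y (n - 1) + y (n - 1) * y n))) ^ d
          ≤ ((15 : ℝ) / 100) ^ d := pow_le_pow_left₀ hbase0 hbase d
        _ ≤ ((15 : ℝ) / 100) ^ 8 := pow_le_pow_of_le_one (by norm_num) (by norm_num) hd
        _ ≤ 1 / 100 := by norm_num
  refine ⟨main, fun x hx => psi_one_le d x hx, hpow, ?_⟩
  intro x hx hmem
  obtain ⟨_, h1l, _, _⟩ := hmem
  have := psi_one_le d x hx
  linarith
end

section
/- Let d ≥ 2 and k ≥ 1 be integers and let c ∈ [0,1). Let x = (x_n)_{n≥1} be a sequence of nonnegative reals with x_i = 1 for all 1 ≤ i ≤ k and x_i ≤ c for all i > k. Then ψ(x)_i = 1 for all 1 ≤ i ≤ k−1, ψ(x)_k ≤ ((2+c)/3)^d, and ψ(x)_i ≤ ((1 + c + c²)/(2 + c))^d for all i ≥ k+1. In particular sup_{i ≥ k} ψ(x)_i ≤ max{((2+c)/3)^d, ((1 + c + c²)/(2 + c))^d} < 1. -/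
lemma psi_of_two_le (d : ℕ) (x : ℕ → ℝ) {n : ℕ} (hn : 2 ≤ n) :
    psi d x n = (x (n - 1) * (1 + x n + x n * x (n + 1)) /
      (1 + x (n - 1) + x (n - 1) * x n)) ^ d := by
  rw [psi, if_neg (by omega), if_neg (by omega), mul_div_assoc, mul_pow]

lemma psi_eq_of_eq_one (d : ℕ) (x : ℕ → ℝ) {i : ℕ} (hi : 1 ≤ i)
    (hx : ∀ j, 1 ≤ j → i ≤ j + 1 → j ≤ i → x j = 1) :
    psi d x i = ((2 + x (i + 1)) / 3) ^ d := by
  obtain rfl | hi2 := eq_or_lt_of_le hi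
  · rw [psi_one, hx 1 le_rfl (by omega) le_rfl]
    ring_nf
  · rw [psi_of_two_le d x hi2, hx i hi (by omega) le_rfl, hx (i - 1) (by omega) (by omega)
      (by omega)]
    ring_nf

lemma mul_div_le_of_le_one_of_le (c a t s : ℝ) (hc0 : 0 ≤ c) (ha0 : 0 ≤ a) (ha1 : a ≤ 1)
    (ht0 : 0 ≤ t) (htc : t ≤ c) (hsc : s ≤ c) :
    a * (1 + t + t * s) / (1 + a + a * t) ≤ (1 + c + c ^ 2) / (2 + c) := by
  rw [div_le_div_iff₀ (by positivity) (by positivity)]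
  nlinarith [mul_nonneg (sub_nonneg.2 ha1) (mul_nonneg hc0 hc0),
    mul_nonneg ha0 (sub_nonneg.2 htc), mul_nonneg (mul_nonneg ha0 ht0) (sub_nonneg.2 hsc),
    mul_nonneg (mul_nonneg (mul_nonneg ha0 ht0) (sub_nonneg.2 hsc)) hc0,
    mul_nonneg (mul_nonneg ha0 (sub_nonneg.2 htc)) hc0,
    mul_nonneg (sub_nonneg.2 ha1) hc0]

lemma psi_le_of_le (d : ℕ) (x : ℕ → ℝ) {i : ℕ} (hi : 2 ≤ i) {c : ℝ} (hc0 : 0 ≤ c)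
    (ha0 : 0 ≤ x (i - 1)) (ha1 : x (i - 1) ≤ 1) (ht0 : 0 ≤ x i) (htc : x i ≤ c)
    (hs0 : 0 ≤ x (i + 1)) (hsc : x (i + 1) ≤ c) :
    psi d x i ≤ ((1 + c + c ^ 2) / (2 + c)) ^ d := by
  rw [psi_of_two_le d x hi]
  exact pow_le_pow_left₀ (by positivity)
    (mul_div_le_of_le_one_of_le c _ _ _ hc0 ha0 ha1 ht0 htc hsc) d

lemma max_pow_lt_one {d : ℕ} (hd : d ≠ 0) {c : ℝ} (hc0 : 0 ≤ c) (hc1 : c < 1) :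
    max (((2 + c) / 3) ^ d) (((1 + c + c ^ 2) / (2 + c)) ^ d) < 1 := by
  refine max_lt (pow_lt_one₀ (by positivity) (by linarith) hd)
    (pow_lt_one₀ (by positivity) ?_ hd)
  rw [div_lt_one (by positivity)]
  nlinarith

theorem stmt_6 (d k : ℕ) (hd : 2 ≤ d) (hk : 1 ≤ k) (c : ℝ) (hc0 : 0 ≤ c) (hc1 : c < 1)
    (x : ℕ → ℝ) (hx0 : ∀ i, 1 ≤ i → 0 ≤ x i)
    (hx1 : ∀ i, 1 ≤ i → i ≤ k → x i = 1) (hx2 : ∀ i, k < i → x i ≤ c) :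
    (∀ i, 1 ≤ i → i ≤ k - 1 → psi d x i = 1) ∧
    psi d x k ≤ ((2 + c) / 3) ^ d ∧
    (∀ i, k + 1 ≤ i → psi d x i ≤ ((1 + c + c ^ 2) / (2 + c)) ^ d) ∧
    (∀ i, k ≤ i → psi d x i ≤
      max (((2 + c) / 3) ^ d) (((1 + c + c ^ 2) / (2 + c)) ^ d)) ∧
    max (((2 + c) / 3) ^ d) (((1 + c + c ^ 2) / (2 + c)) ^ d) < 1 := by
  have inside : ∀ i, 1 ≤ i → i ≤ k - 1 → psi d x i = 1 := fun i hi hik => by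
    rw [psi_eq_of_eq_one d x hi fun j hj _ hji => hx1 j hj (by omega), hx1 (i + 1) (by omega)
      (by omega)]
    norm_num
  have edge : psi d x k ≤ ((2 + c) / 3) ^ d := by
    rw [psi_eq_of_eq_one d x hk fun j hj _ hjk => hx1 j hj hjk]
    have := hx0 (k + 1) (by omega)
    gcongr
    exact hx2 (k + 1) (by omega)
  have beyond : ∀ i, k + 1 ≤ i → psi d x i ≤ ((1 + c + c ^ 2) / (2 + c)) ^ d := fun i hi => by
    have ha1 : x (i - 1) ≤ 1 := by
      obtain hik | hik := eq_or_lt_of_le (show k ≤ i - 1 by omega)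
      · exact (hx1 (i - 1) (by omega) hik.ge).le
      · exact (hx2 (i - 1) hik).trans hc1.le
    exact psi_le_of_le d x (by omega) hc0 (hx0 _ (by omega)) ha1 (hx0 _ (by omega))
      (hx2 i (by omega)) (hx0 _ (by omega)) (hx2 _ (by omega))
  refine ⟨inside, edge, beyond, fun i hi => ?_, max_pow_lt_one (by omega) hc0 hc1⟩
  obtain rfl | hki := eq_or_lt_of_le hi
  · exact edge.trans (le_max_left _ _)
  · exact (beyond i hki).trans (le_max_right _ _)
end

section
/- Let d ≥ 2 be an integer, let a, b, c ∈ [0,1] with a ≤ b and c < 1/2, and let x_1, x_2 be reals with a ≤ x_1 ≤ b and 0 ≤ x_2 ≤ c. Then: (i) if 2 ≤ d ≤ 5 and (d−2)·a ≤ 1, then d(1−x_2)(1+x_1+x_1·x_2)^{d−1}/(1+2x_1)^{d+1} ≤ d(1+a)^{d−1}/(1+2a)^{d+1}; (ii) if d ∈ {6,7} and (d−2)·a ≥ 1 + d·a·c, then d(1−x_2)(1+x_1+x_1·x_2)^{d−1}/(1+2x_1)^{d+1} ≤ d(1−c)(1+a+a·c)^{d−1}/(1+2a)^{d+1}; (iii)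 if 2 ≤ d ≤ 4 and b·((1−c)·d − 2) ≤ 1, then d·x_1(1+x_1+x_1·x_2)^{d−1}/(1+2x_1)^d ≤ d·b(1+b+b·c)^{d−1}/(1+2b)^d; (iv) if 5 ≤ d ≤ 7, then d·x_1(1+x_1+x_1·x_2)^{d−1}/(1+2x_1)^d ≤ (d−1)^{d−1}/(d^{d−1}·(1−c)). -/
/-!
Everything rests on the tangent-line inequality `v^(n+1) + (n+1) v^n (u - v) ≤ u^(n+1)` for
`u, v ≥ 0` (Bernoulli). Write `P = 1 + x₁ + x₁ x₂` and `Q = 1 + 2 x₁`.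

(i), (ii): `P / Q` decreases in `x₁`, so one may take `x₁ = a`; then `(1 - x₂)(1 + a + a x₂)^(d-1)`
is decreasing in `x₂` when `(d - 2) a ≤ 1`, and increasing on `[0, c]` when `(d - 2) a ≥ 1 + d a c`.

(iii): after raising `x₂` to `c`, the substitution `w = x₁ / Q` gives `P / Q = 1 - (1 - c) w`, so
the quantity is `d w (1 - (1 - c) w)^(d-1)`, increasing in `w` as long as `d (1 - c) w ≤ 1`.

(iv): `(d - 1)(1 - x₂) x₁` and `d - 1` copies of `P` add up to `(d - 1) Q`, so AM-GM bounds their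
product by `((d - 1) Q / d)^d`.
-/

section Tangent

variable {K : Type*} [Field K] [LinearOrder K] [IsStrictOrderedRing K]

theorem pow_succ_add_mul_sub_le_pow_succ {u v : K} (hu : 0 ≤ u) (hv : 0 ≤ v) (n : ℕ) :
    v ^ (n + 1) + (n + 1) * v ^ n * (u - v) ≤ u ^ (n + 1) := by
  rcases hv.eq_or_lt with rfl | hv
  · rcases n with _ | n <;> simp [pow_nonneg hu]
  have bernoulli := one_add_mul_sub_le_pow (a := u / v) (by linarith [div_nonneg hu hv.le]) (n + 1)
  calc v ^ (n + 1) + (n + 1) * v ^ n * (u - v)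
      = v ^ (n + 1) * (1 + ((n + 1 : ℕ) : K) * (u / v - 1)) := by
        push_cast; field_simp; ring
    _ ≤ v ^ (n + 1) * (u / v) ^ (n + 1) := by gcongr
    _ = u ^ (n + 1) := by rw [div_pow, mul_div_cancel₀ _ (pow_pos hv _).ne']

theorem mul_pow_le_add_mul_div_pow {a b : K} (ha : 0 ≤ a) (hb : 0 ≤ b) (n : ℕ) :
    a * b ^ n ≤ ((a + n * b) / (n + 1)) ^ (n + 1) := by
  have tangent := pow_succ_add_mul_sub_le_pow_succ (u := (a + n * b) / (n + 1)) (by positivity) hb n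
  calc a * b ^ n = b ^ (n + 1) + (n + 1) * b ^ n * ((a + n * b) / (n + 1) - b) := by
        field_simp; ring
    _ ≤ _ := tangent

end Tangent

-- `|∂ψ₁/∂x₁|` and `|∂ψ₁/∂x₂|` for `ψ₁ = ((1 + x₁ + x₁ x₂) / (1 + 2 x₁))^d`.
noncomputable def partial₁ψ (d : ℕ) (x₁ x₂ : ℝ) : ℝ :=
  d * (1 - x₂) * (1 + x₁ + x₁ * x₂) ^ (d - 1) / (1 + 2 * x₁) ^ (d + 1)

noncomputable def partial₂ψ (d : ℕ) (x₁ x₂ : ℝ) : ℝ :=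
  d * x₁ * (1 + x₁ + x₁ * x₂) ^ (d - 1) / (1 + 2 * x₁) ^ d

theorem one_add_add_mul_div_le {a x t : ℝ} (ha : 0 ≤ a) (hax : a ≤ x) (ht : t ≤ 1) :
    (1 + x + x * t) / (1 + 2 * x) ≤ (1 + a + a * t) / (1 + 2 * a) := by
  rw [div_le_div_iff₀ (by linarith) (by linarith)]
  nlinarith [mul_nonneg (sub_nonneg.2 hax) (sub_nonneg.2 ht)]

theorem pow_div_pow_le_of_le {a x t : ℝ} (ha : 0 ≤ a) (hax : a ≤ x) (ht₀ : 0 ≤ t) (ht₁ : t ≤ 1)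
    {n m : ℕ} (hnm : n ≤ m) :
    (1 + x + x * t) ^ n / (1 + 2 * x) ^ m ≤ (1 + a + a * t) ^ n / (1 + 2 * a) ^ m := by
  have hx : 0 ≤ x := ha.trans hax
  obtain ⟨k, rfl⟩ := Nat.exists_eq_add_of_le hnm
  have split (y : ℝ) : (1 + y + y * t) ^ n / (1 + 2 * y) ^ (n + k) =
      ((1 + y + y * t) / (1 + 2 * y)) ^ n / (1 + 2 * y) ^ k := by
    rw [div_pow, pow_add, div_div]
  rw [split, split]
  gcongr ?_ ^ n / ?_
  · exact one_add_add_mul_div_le ha hax ht₁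
  · gcongr

theorem one_sub_mul_pow_le_one_add_pow {a t : ℝ} (ha : 0 ≤ a) (ht : 0 ≤ t) {n : ℕ}
    (h : n * a ≤ 1) : (1 - t) * (1 + a + a * t) ^ (n + 1) ≤ (1 + a) ^ (n + 1) := by
  have tangent := pow_succ_add_mul_sub_le_pow_succ (u := 1 + a) (v := 1 + a + a * t)
    (by linarith) (by positivity) n
  have gap : 0 ≤ t * (1 + a + a * t) ^ n * (1 + a + a * t - (n + 1) * a) := by
    have : 0 ≤ 1 + a + a * t - (n + 1) * a := by nlinarith [mul_nonneg ha ht]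
    positivity
  calc (1 - t) * (1 + a + a * t) ^ (n + 1)
      = (1 + a + a * t) ^ (n + 1) + (n + 1) * (1 + a + a * t) ^ n * (1 + a - (1 + a + a * t))
        - t * (1 + a + a * t) ^ n * (1 + a + a * t - (n + 1) * a) := by ring
    _ ≤ (1 + a) ^ (n + 1) := by linarith

theorem one_sub_mul_pow_le_of_le {a t c : ℝ} (ha : 0 ≤ a) (ht : 0 ≤ t) (htc : t ≤ c) {n : ℕ}
    (h : 1 + (n + 2) * a * c ≤ n * a) :
    (1 - t) * (1 + a + a * t) ^ (n + 1) ≤ (1 - c) * (1 + a + a * c) ^ (n + 1) := by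
  have hc : c ≤ 1 := by
    have : 0 ≤ (n + 2) * a := by positivity
    nlinarith
  have tangent := pow_succ_add_mul_sub_le_pow_succ (u := 1 + a + a * c) (v := 1 + a + a * t)
    (by nlinarith) (by positivity) n
  have gap : 0 ≤ (c - t) * (1 + a + a * t) ^ n * ((1 - c) * (n + 1) * a - (1 + a + a * t)) := by
    have : 0 ≤ (1 - c) * (n + 1) * a - (1 + a + a * t) := by
      nlinarith [mul_le_mul_of_nonneg_left htc ha]
    have : 0 ≤ c - t := by linarith
    positivity
  calc (1 - t) * (1 + a + a * t) ^ (n + 1)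
      = (1 - c) * ((1 + a + a * t) ^ (n + 1)
          + (n + 1) * (1 + a + a * t) ^ n * (1 + a + a * c - (1 + a + a * t)))
        - (c - t) * (1 + a + a * t) ^ n * ((1 - c) * (n + 1) * a - (1 + a + a * t)) := by ring
    _ ≤ (1 - c) * (1 + a + a * c) ^ (n + 1) := by
      have := mul_le_mul_of_nonneg_left tangent (sub_nonneg.2 hc)
      linarith

theorem mul_one_sub_mul_pow_le {γ w W : ℝ} (hγ : 0 ≤ γ) (hw : 0 ≤ w) (hwW : w ≤ W) {n : ℕ}
    (h : (n + 2) * γ * W ≤ 1) : w * (1 - γ * w) ^ (n + 1) ≤ W * (1 - γ * W) ^ (n + 1) := by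
  have hγw : γ * w ≤ γ * W := mul_le_mul_of_nonneg_left hwW hγ
  have hγW : 0 ≤ γ * W := mul_nonneg hγ (hw.trans hwW)
  have tangent := pow_succ_add_mul_sub_le_pow_succ (u := 1 - γ * W) (v := 1 - γ * w)
    (by nlinarith) (by nlinarith) n
  have gap : 0 ≤ (W - w) * (1 - γ * w) ^ n * (1 - γ * w - (n + 1) * γ * W) := by
    have : 0 ≤ 1 - γ * w - (n + 1) * γ * W := by nlinarith
    have : 0 ≤ 1 - γ * w := by nlinarith
    have : 0 ≤ W - w := by linarith
    positivity
  calc w * (1 - γ * w) ^ (n + 1)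
      = W * ((1 - γ * w) ^ (n + 1) + (n + 1) * (1 - γ * w) ^ n * (1 - γ * W - (1 - γ * w)))
        - (W - w) * (1 - γ * w) ^ n * (1 - γ * w - (n + 1) * γ * W) := by ring
    _ ≤ W * (1 - γ * W) ^ (n + 1) := by
      have := mul_le_mul_of_nonneg_left tangent (hw.trans hwW)
      linarith

theorem partial₁ψ_le_at_left {d : ℕ} {a x t : ℝ} (ha : 0 ≤ a) (hax : a ≤ x) (ht₀ : 0 ≤ t)
    (ht₁ : t ≤ 1) :
    partial₁ψ d x t ≤ d * ((1 - t) * (1 + a + a * t) ^ (d - 1)) / (1 + 2 * a) ^ (d + 1) := by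
  have hmono := pow_div_pow_le_of_le ha hax ht₀ ht₁ (show d - 1 ≤ d + 1 by omega)
  calc partial₁ψ d x t = d * (1 - t) * ((1 + x + x * t) ^ (d - 1) / (1 + 2 * x) ^ (d + 1)) := by
        rw [partial₁ψ, mul_div_assoc]
    _ ≤ d * (1 - t) * ((1 + a + a * t) ^ (d - 1) / (1 + 2 * a) ^ (d + 1)) := by
        have : 0 ≤ 1 - t := by linarith
        gcongr
    _ = d * ((1 - t) * (1 + a + a * t) ^ (d - 1)) / (1 + 2 * a) ^ (d + 1) := by ring

theorem partial₁ψ_le_of_sub_two_mul_le {d : ℕ} (hd : 2 ≤ d) {a x t : ℝ} (ha : 0 ≤ a) (hax : a ≤ x)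
    (ht₀ : 0 ≤ t) (ht₁ : t ≤ 1) (h : ((d : ℝ) - 2) * a ≤ 1) :
    partial₁ψ d x t ≤ d * (1 + a) ^ (d - 1) / (1 + 2 * a) ^ (d + 1) := by
  obtain ⟨n, rfl⟩ := Nat.exists_eq_add_of_le' hd
  push_cast at h
  refine (partial₁ψ_le_at_left ha hax ht₀ ht₁).trans ?_
  gcongr
  exact one_sub_mul_pow_le_one_add_pow ha ht₀ (by linarith)

theorem partial₁ψ_le_partial₁ψ {d : ℕ} (hd : 2 ≤ d) {a x t c : ℝ} (ha : 0 ≤ a) (hax : a ≤ x)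
    (ht₀ : 0 ≤ t) (htc : t ≤ c) (hc : c ≤ 1) (h : 1 + (d : ℝ) * a * c ≤ ((d : ℝ) - 2) * a) :
    partial₁ψ d x t ≤ partial₁ψ d a c := by
  obtain ⟨n, rfl⟩ := Nat.exists_eq_add_of_le' hd
  push_cast at h
  refine (partial₁ψ_le_at_left ha hax ht₀ (htc.trans hc)).trans ?_
  rw [partial₁ψ, mul_assoc]
  gcongr _ * ?_ / _
  exact one_sub_mul_pow_le_of_le ha ht₀ htc (by linarith)

theorem partial₂ψ_le_partial₂ψ {d : ℕ} (hd : 2 ≤ d) {x t b c : ℝ} (hx : 0 ≤ x) (hxb : x ≤ b)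
    (ht₀ : 0 ≤ t) (htc : t ≤ c) (hc : c ≤ 1) (h : b * ((1 - c) * d - 2) ≤ 1) :
    partial₂ψ d x t ≤ partial₂ψ d b c := by
  obtain ⟨n, rfl⟩ := Nat.exists_eq_add_of_le' hd
  have hb : 0 ≤ b := hx.trans hxb
  have subst (y : ℝ) (hy : 0 ≤ y) : partial₂ψ (n + 2) y c =
      (n + 2) * (y / (1 + 2 * y) * (1 - (1 - c) * (y / (1 + 2 * y))) ^ (n + 1)) := by
    have hQ : 1 + 2 * y ≠ 0 := by positivity
    have : 1 - (1 - c) * (y / (1 + 2 * y)) = (1 + y + y * c) / (1 + 2 * y) := by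
      field_simp
      ring
    rw [this, partial₂ψ, show n + 2 - 1 = n + 1 from rfl, div_pow]
    push_cast
    field_simp
    ring
  calc partial₂ψ (n + 2) x t ≤ partial₂ψ (n + 2) x c := by
        unfold partial₂ψ
        gcongr
    _ ≤ partial₂ψ (n + 2) b c := by
        rw [subst x hx, subst b hb]
        gcongr _ * ?_
        apply mul_one_sub_mul_pow_le (by linarith) (by positivity)
        · rw [div_le_div_iff₀ (by positivity) (by positivity)]
          nlinarith
        · push_cast at h
          rw [mul_div_assoc', div_le_one (by positivity)]
          nlinarith

theorem partial₂ψ_le_of_lt_one {d : ℕ} (hd : 2 ≤ d) {x t c : ℝ} (hx : 0 ≤ x) (ht₀ : 0 ≤ t)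
    (htc : t ≤ c) (hc : c < 1) :
    partial₂ψ d x t ≤ ((d : ℝ) - 1) ^ (d - 1) / ((d : ℝ) ^ (d - 1) * (1 - c)) := by
  obtain ⟨n, rfl⟩ := Nat.exists_eq_add_of_le' hd
  have hP : 0 ≤ 1 + x + x * t := by positivity
  have hα : 0 ≤ (n + 1) * (1 - t) * x := by
    have : 0 ≤ 1 - t := by linarith
    positivity
  have amgm := mul_pow_le_add_mul_div_pow hα hP (n + 1)
  have hmean : ((n + 1) * (1 - t) * x + ((n + 1 : ℕ) : ℝ) * (1 + x + x * t)) / ((n + 1 : ℕ) + 1)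
      = (n + 1) * (1 + 2 * x) / (n + 2) := by
    push_cast
    field_simp
    ring
  rw [hmean, div_pow, le_div_iff₀ (by positivity)] at amgm
  have hc' : 0 < 1 - c := by linarith
  rw [partial₂ψ, show n + 2 - 1 = n + 1 from rfl]
  push_cast
  rw [div_le_div_iff₀ (by positivity) (by positivity)]
  refine le_of_mul_le_mul_left ?_ (show (0 : ℝ) < n + 1 by positivity)
  calc (n + 1) * ((n + 2) * x * (1 + x + x * t) ^ (n + 1) * ((n + 2) ^ (n + 1) * (1 - c)))
      ≤ (n + 1) * ((n + 2) * x * (1 + x + x * t) ^ (n + 1) * ((n + 2) ^ (n + 1) * (1 - t))) := by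
        gcongr
    _ = (n + 1) * (1 - t) * x * (1 + x + x * t) ^ (n + 1) * (n + 2) ^ (n + 2) := by ring
    _ ≤ ((n + 1) * (1 + 2 * x)) ^ (n + 2) := amgm
    _ = (n + 1) * ((n + 2 - 1) ^ (n + 1) * (1 + 2 * x) ^ (n + 2)) := by rw [mul_pow]; ring

theorem stmt_9_general (d : ℕ) (hd : 2 ≤ d) (a b c : ℝ)
    (ha : a ∈ Set.Icc (0 : ℝ) 1) (hchalf : c < 1 / 2)
    (x₁ x₂ : ℝ) (hx1a : a ≤ x₁) (hx1b : x₁ ≤ b) (hx20 : 0 ≤ x₂) (hx2c : x₂ ≤ c) :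
    (d ≤ 5 → ((d : ℝ) - 2) * a ≤ 1 →
      (d : ℝ) * (1 - x₂) * (1 + x₁ + x₁ * x₂) ^ (d - 1) / (1 + 2 * x₁) ^ (d + 1) ≤
        (d : ℝ) * (1 + a) ^ (d - 1) / (1 + 2 * a) ^ (d + 1)) ∧
    ((d = 6 ∨ d = 7) → 1 + (d : ℝ) * a * c ≤ ((d : ℝ) - 2) * a →
      (d : ℝ) * (1 - x₂) * (1 + x₁ + x₁ * x₂) ^ (d - 1) / (1 + 2 * x₁) ^ (d + 1) ≤
        (d : ℝ) * (1 - c) * (1 + a + a * c) ^ (d - 1) / (1 + 2 * a) ^ (d + 1)) ∧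
    (d ≤ 4 → b * ((1 - c) * (d : ℝ) - 2) ≤ 1 →
      (d : ℝ) * x₁ * (1 + x₁ + x₁ * x₂) ^ (d - 1) / (1 + 2 * x₁) ^ d ≤
        (d : ℝ) * b * (1 + b + b * c) ^ (d - 1) / (1 + 2 * b) ^ d) ∧
    (5 ≤ d → d ≤ 7 →
      (d : ℝ) * x₁ * (1 + x₁ + x₁ * x₂) ^ (d - 1) / (1 + 2 * x₁) ^ d ≤
        ((d : ℝ) - 1) ^ (d - 1) / ((d : ℝ) ^ (d - 1) * (1 - c))) := by
  have hx₁ : 0 ≤ x₁ := ha.1.trans hx1a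
  have hc : c < 1 := by linarith
  refine ⟨fun _ h ↦ ?_, fun _ h ↦ ?_, fun _ h ↦ ?_, fun _ _ ↦ ?_⟩
  · exact partial₁ψ_le_of_sub_two_mul_le hd ha.1 hx1a hx20 (by linarith) h
  · exact partial₁ψ_le_partial₁ψ hd ha.1 hx1a hx20 hx2c hc.le h
  · exact partial₂ψ_le_partial₂ψ hd hx₁ hx1b hx20 hx2c hc.le h
  · exact partial₂ψ_le_of_lt_one hd hx₁ hx20 hx2c hc

theorem stmt_9 (d : ℕ) (hd : 2 ≤ d) (a b c : ℝ)
    (ha : a ∈ Set.Icc (0 : ℝ) 1) (hb : b ∈ Set.Icc (0 : ℝ) 1)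
    (hc0 : 0 ≤ c) (hc1 : c ∈ Set.Icc (0 : ℝ) 1) (hab : a ≤ b) (hchalf : c < 1 / 2)
    (x₁ x₂ : ℝ) (hx1a : a ≤ x₁) (hx1b : x₁ ≤ b) (hx20 : 0 ≤ x₂) (hx2c : x₂ ≤ c) :
    (d ≤ 5 → ((d : ℝ) - 2) * a ≤ 1 →
      (d : ℝ) * (1 - x₂) * (1 + x₁ + x₁ * x₂) ^ (d - 1) / (1 + 2 * x₁) ^ (d + 1) ≤
        (d : ℝ) * (1 + a) ^ (d - 1) / (1 + 2 * a) ^ (d + 1)) ∧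
    ((d = 6 ∨ d = 7) → 1 + (d : ℝ) * a * c ≤ ((d : ℝ) - 2) * a →
      (d : ℝ) * (1 - x₂) * (1 + x₁ + x₁ * x₂) ^ (d - 1) / (1 + 2 * x₁) ^ (d + 1) ≤
        (d : ℝ) * (1 - c) * (1 + a + a * c) ^ (d - 1) / (1 + 2 * a) ^ (d + 1)) ∧
    (d ≤ 4 → b * ((1 - c) * (d : ℝ) - 2) ≤ 1 →
      (d : ℝ) * x₁ * (1 + x₁ + x₁ * x₂) ^ (d - 1) / (1 + 2 * x₁) ^ d ≤
        (d : ℝ) * b * (1 + b + b * c) ^ (d - 1) / (1 + 2 * b) ^ d) ∧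
    (5 ≤ d → d ≤ 7 →
      (d : ℝ) * x₁ * (1 + x₁ + x₁ * x₂) ^ (d - 1) / (1 + 2 * x₁) ^ d ≤
        ((d : ℝ) - 1) ^ (d - 1) / ((d : ℝ) ^ (d - 1) * (1 - c))) :=
  stmt_9_general d hd a b c ha hchalf x₁ x₂ hx1a hx1b hx20 hx2c
end

section
/- Let d ≥ 2 be an integer, let b, c ∈ [0,1] with c ≤ b, and let u, v, w be reals with 0 ≤ u ≤ b and 0 ≤ v ≤ c and 0 ≤ w ≤ c. Define Q := d·u^{d−1}·(1+v+v·w)^d/(1+u+u·v)^{d+1}, R := d·u^d·(1+v+v·w)^{d−1}·(1+u·w+w)/(1+u+u·v)^{d+1}, and T := d·u^d·v·(1+v+v·w)^{d−1}/(1+u+u·v)^d. Then: (i) if d = 2, Q ≤ 4d(d−1)^{d−1}(1+c+c²)^d/((d+1)^{d+1}(1+c)^{d−1}); (ii) if 3 ≤ d ≤ 7 and 1 + 2b(1+c) ≤ d, then Q ≤ d·b^{d−1}(1+c+c²)^d/((1+b)(1+b+b·c)^d); (iii) R ≤ Q·b·(1+c+b·c); (iv) T ≤ d·b^d·c·(1+c+c²)^{d−1}/(1+b+b·c)^d.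 -/
/-!
Write `1 + u + u v = 1 + t` with `t = u (1 + v)`. The `u`-dependence of `Q` is then carried by
`t ^ (d - 1) / (1 + t) ^ (d + 1)`, which by weighted AM-GM increases on `[0, (d - 1) / 2]` and
peaks at `t = (d - 1) / 2` with value `4 (d - 1) ^ (d - 1) / (d + 1) ^ (d + 1)`. Monotonicity gives
(ii), where `2 b (1 + c) ≤ d - 1`; the peak value gives (i). The remaining factors, normalised by
`1 + b + b v` (by `1 + v` in (i)), increase in `u`, `v`, `w`, so they are bounded by their values at
`u = b`, `v = w = c`.
-/

lemma pow_le_weighted_mean_pow (n : ℕ) {l : ℝ} (hl : 0 ≤ l) :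
    l ^ n ≤ ((n * l + 2) / (n + 2)) ^ (n + 2) := by
  have hsum : (n : ℝ) / (n + 2) + 2 / (n + 2) = 1 := by field_simp
  have amgm : l ^ ((n : ℝ) / (n + 2)) ≤ (n * l + 2) / (n + 2) := by
    have h := Real.geom_mean_le_arith_mean2_weighted (by positivity) (by positivity) hl
      zero_le_one hsum
    rw [Real.one_rpow, mul_one] at h
    exact h.trans_eq (by field_simp)
  calc l ^ n = (l ^ ((n : ℝ) / (n + 2))) ^ (n + 2) := by
        rw [← Real.rpow_natCast _ (n + 2), ← Real.rpow_mul hl, ← Real.rpow_natCast l n]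
        push_cast
        field_simp
    _ ≤ _ := pow_le_pow_left₀ (by positivity) amgm _

/-- `x ↦ x ^ n / (1 + x) ^ (n + 2)` increases on `[0, n / 2]` and decreases on `[n / 2, ∞)`. -/
lemma pow_mul_one_add_pow_le (n : ℕ) {t τ : ℝ} (ht : 0 ≤ t) (hτ : 0 < τ)
    (h : 0 ≤ (τ - t) * (n - 2 * τ)) :
    t ^ n * (1 + τ) ^ (n + 2) ≤ τ ^ n * (1 + t) ^ (n + 2) := by
  set l := t / τ
  have hl : 0 ≤ l := by positivity
  have hlτ : l * τ = t := div_mul_cancel₀ t hτ.ne'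
  have hsign : 0 ≤ (1 - l) * (n - 2 * τ) := by
    refine nonneg_of_mul_nonneg_right (a := τ) ?_ hτ
    rw [← hlτ] at h
    linarith
  -- `(n + 2) (1 + t) - (n l + 2) (1 + τ) = (1 - l) (n - 2 τ)`
  have hmean : (n * l + 2) / (n + 2) * (1 + τ) ≤ 1 + t := by
    rw [div_mul_eq_mul_div, div_le_iff₀ (by positivity), ← hlτ]
    nlinarith
  calc t ^ n * (1 + τ) ^ (n + 2) = τ ^ n * (l ^ n * (1 + τ) ^ (n + 2)) := by
        rw [← hlτ]; ring
    _ ≤ τ ^ n * (((n * l + 2) / (n + 2)) ^ (n + 2) * (1 + τ) ^ (n + 2)) := by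
        gcongr; exact pow_le_weighted_mean_pow n hl
    _ = τ ^ n * ((n * l + 2) / (n + 2) * (1 + τ)) ^ (n + 2) := by rw [mul_pow]
    _ ≤ τ ^ n * (1 + t) ^ (n + 2) := by gcongr

lemma pow_div_one_add_pow_le_of_le (n : ℕ) {t τ : ℝ} (ht : 0 ≤ t) (htτ : t ≤ τ)
    (hτ : 2 * τ ≤ n) :
    t ^ n / (1 + t) ^ (n + 2) ≤ τ ^ n / (1 + τ) ^ (n + 2) := by
  rcases (ht.trans htτ).eq_or_lt with hτ0 | hτ0
  · obtain rfl : t = τ := by linarith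
    rfl
  rw [div_le_div_iff₀ (by positivity) (by positivity)]
  exact pow_mul_one_add_pow_le n ht hτ0 (mul_nonneg (by linarith) (by linarith))

lemma pow_div_one_add_pow_le (n : ℕ) (hn : 0 < n) {t : ℝ} (ht : 0 ≤ t) :
    t ^ n / (1 + t) ^ (n + 2) ≤ 4 * n ^ n / (n + 2) ^ (n + 2) := by
  have key := pow_mul_one_add_pow_le n ht (τ := n / 2) (by positivity) (le_of_eq (by ring))
  rw [div_le_div_iff₀ (by positivity) (by positivity)]
  calc t ^ n * (n + 2) ^ (n + 2) = 2 ^ (n + 2) * (t ^ n * (1 + n / 2) ^ (n + 2)) := by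
        rw [show (n : ℝ) + 2 = 2 * (1 + n / 2) by ring, mul_pow]; ring
    _ ≤ 2 ^ (n + 2) * ((n / 2) ^ n * (1 + t) ^ (n + 2)) := by gcongr
    _ = 4 * n ^ n * (1 + t) ^ (n + 2) := by
        rw [div_pow]; field_simp; ring

lemma pow_div_one_add_add_mul_pow_eq (n : ℕ) (u : ℝ) {v : ℝ} (hv : 0 ≤ v) :
    u ^ n / (1 + u + u * v) ^ (n + 2) =
      (u * (1 + v)) ^ n / (1 + u * (1 + v)) ^ (n + 2) / (1 + v) ^ n := by
  rw [mul_pow]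
  field_simp
  ring

lemma pow_div_one_add_add_mul_pow_le_of_le (n : ℕ) {u b v : ℝ} (hu : 0 ≤ u) (hub : u ≤ b)
    (hv : 0 ≤ v) (hbv : 2 * (b * (1 + v)) ≤ n) :
    u ^ n / (1 + u + u * v) ^ (n + 2) ≤ b ^ n / (1 + b + b * v) ^ (n + 2) := by
  rw [pow_div_one_add_add_mul_pow_eq n u hv, pow_div_one_add_add_mul_pow_eq n b hv]
  gcongr ?_ / _
  exact pow_div_one_add_pow_le_of_le n (by positivity)
    (mul_le_mul_of_nonneg_right hub (by positivity)) hbv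

lemma pow_div_one_add_add_mul_pow_le (n : ℕ) (hn : 0 < n) {u v : ℝ} (hu : 0 ≤ u)
    (hv : 0 ≤ v) :
    u ^ n / (1 + u + u * v) ^ (n + 2) ≤ 4 * n ^ n / (n + 2) ^ (n + 2) / (1 + v) ^ n := by
  rw [pow_div_one_add_add_mul_pow_eq n u hv]
  gcongr ?_ / _
  exact pow_div_one_add_pow_le n hn (by positivity)

lemma div_add_mul_le_div_add_mul {p q x y : ℝ} (hp : 0 < p) (hq : 0 ≤ q) (hx : 0 ≤ x)
    (hxy : x ≤ y) : x / (p + q * x) ≤ y / (p + q * y) := by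
  have hy : 0 ≤ y := hx.trans hxy
  rw [div_le_div_iff₀ (by positivity) (by positivity)]
  nlinarith [mul_le_mul_of_nonneg_left hxy hp.le]

lemma one_add_add_mul_div_le_s10 {b c v w : ℝ} (hb : 0 ≤ b) (hv : 0 ≤ v) (hvc : v ≤ c)
    (hwc : w ≤ c) :
    (1 + v + v * w) / (1 + b + b * v) ≤ (1 + c + c ^ 2) / (1 + b + b * c) := by
  have hc : 0 ≤ c := hv.trans hvc
  rw [div_le_div_iff₀ (by positivity) (by positivity)]
  nlinarith [mul_le_mul_of_nonneg_right (mul_le_mul_of_nonneg_left hwc hv)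
      (by positivity : (0 : ℝ) ≤ 1 + b + b * c),
    mul_nonneg (sub_nonneg.2 hvc) (by positivity : (0 : ℝ) ≤ 1 + c + b * c)]

lemma one_add_add_mul_pow_div_le (n : ℕ) {c v w : ℝ} (hv : 0 ≤ v) (hvc : v ≤ c)
    (hw : 0 ≤ w) (hwc : w ≤ c) :
    (1 + v + v * w) ^ (n + 1) / (1 + v) ^ n ≤ (1 + c + c ^ 2) ^ (n + 1) / (1 + c) ^ n := by
  have hc : 0 ≤ c := hv.trans hvc
  have hvw : v * w ≤ c * c := mul_le_mul hvc hwc hw hc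
  have hratio : (1 + v + v * w) / (1 + v) ≤ (1 + c + c ^ 2) / (1 + c) := by
    rw [div_le_div_iff₀ (by positivity) (by positivity)]
    nlinarith [mul_le_mul_of_nonneg_left hwc hv, mul_le_mul_of_nonneg_left hvc hc]
  have hA : 1 + v + v * w ≤ 1 + c + c ^ 2 := by nlinarith
  calc (1 + v + v * w) ^ (n + 1) / (1 + v) ^ n
      = ((1 + v + v * w) / (1 + v)) ^ n * (1 + v + v * w) := by
        rw [div_pow]; field_simp; ring
    _ ≤ ((1 + c + c ^ 2) / (1 + c)) ^ n * (1 + c + c ^ 2) := by gcongr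
    _ = (1 + c + c ^ 2) ^ (n + 1) / (1 + c) ^ n := by
        rw [div_pow]; field_simp; ring

/-- The entries `Q`, `R`, `T`, indexed by `n = d - 1`. -/
noncomputable def psiDerivPrev (n : ℕ) (u v w : ℝ) : ℝ :=
  (n + 1) * u ^ n * (1 + v + v * w) ^ (n + 1) / (1 + u + u * v) ^ (n + 2)

noncomputable def psiDerivSelf (n : ℕ) (u v w : ℝ) : ℝ :=
  (n + 1) * u ^ (n + 1) * (1 + v + v * w) ^ n * (1 + u * w + w) / (1 + u + u * v) ^ (n + 2)

noncomputable def psiDerivNext (n : ℕ) (u v w : ℝ) : ℝ :=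
  (n + 1) * u ^ (n + 1) * v * (1 + v + v * w) ^ n / (1 + u + u * v) ^ (n + 1)

section

variable {b c u v w : ℝ} (n : ℕ)

lemma psiDerivPrev_le_max (hn : 0 < n) (hu : 0 ≤ u) (hv : 0 ≤ v) (hvc : v ≤ c) (hw : 0 ≤ w)
    (hwc : w ≤ c) :
    psiDerivPrev n u v w ≤
      4 * (n + 1) * n ^ n * (1 + c + c ^ 2) ^ (n + 1) / ((n + 2) ^ (n + 2) * (1 + c) ^ n) :=
  calc psiDerivPrev n u v w
      = (n + 1) * (u ^ n / (1 + u + u * v) ^ (n + 2)) * (1 + v + v * w) ^ (n + 1) := by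
        unfold psiDerivPrev; ring
    _ ≤ (n + 1) * (4 * n ^ n / (n + 2) ^ (n + 2) / (1 + v) ^ n) * (1 + v + v * w) ^ (n + 1) := by
        gcongr _ * ?_ * _; exact pow_div_one_add_add_mul_pow_le n hn hu hv
    _ = (n + 1) * (4 * n ^ n / (n + 2) ^ (n + 2)) *
          ((1 + v + v * w) ^ (n + 1) / (1 + v) ^ n) := by ring
    _ ≤ (n + 1) * (4 * n ^ n / (n + 2) ^ (n + 2)) *
          ((1 + c + c ^ 2) ^ (n + 1) / (1 + c) ^ n) := by
        gcongr _ * ?_; exact one_add_add_mul_pow_div_le n hv hvc hw hwc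
    _ = _ := by
        have hc : 0 ≤ c := hv.trans hvc
        field_simp

lemma psiDerivPrev_le_of_two_mul_le (hu : 0 ≤ u) (hub : u ≤ b) (hv : 0 ≤ v) (hvc : v ≤ c)
    (hw : 0 ≤ w) (hwc : w ≤ c) (hbc : 2 * (b * (1 + c)) ≤ n) :
    psiDerivPrev n u v w ≤
      (n + 1) * b ^ n * (1 + c + c ^ 2) ^ (n + 1) / ((1 + b) * (1 + b + b * c) ^ (n + 1)) := by
  have hb : 0 ≤ b := hu.trans hub
  have hc : 0 ≤ c := hv.trans hvc
  have hZ : 0 < 1 + b + b * v := by positivity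
  have hbv : 2 * (b * (1 + v)) ≤ n := le_trans (by gcongr) hbc
  calc psiDerivPrev n u v w
      = (n + 1) * (u ^ n / (1 + u + u * v) ^ (n + 2)) * (1 + v + v * w) ^ (n + 1) := by
        unfold psiDerivPrev; ring
    _ ≤ (n + 1) * (b ^ n / (1 + b + b * v) ^ (n + 2)) * (1 + v + v * w) ^ (n + 1) := by
        gcongr _ * ?_ * _; exact pow_div_one_add_add_mul_pow_le_of_le n hu hub hv hbv
    _ = (n + 1) * b ^ n * ((1 + v + v * w) / (1 + b + b * v)) ^ (n + 1) / (1 + b + b * v) := by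
        rw [div_pow]; field_simp; ring
    _ ≤ (n + 1) * b ^ n * ((1 + c + c ^ 2) / (1 + b + b * c)) ^ (n + 1) / (1 + b) := by
        gcongr _ * ?_ ^ _ / ?_
        · exact one_add_add_mul_div_le_s10 hb hv hvc hwc
        · exact le_add_of_nonneg_right (by positivity)
    _ = _ := by rw [div_pow]; field_simp

lemma psiDerivSelf_le (hu : 0 ≤ u) (hub : u ≤ b) (hv : 0 ≤ v) (hw : 0 ≤ w) (hwc : w ≤ c) :
    psiDerivSelf n u v w ≤ psiDerivPrev n u v w * (b * (1 + c + b * c)) := by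
  have hb : 0 ≤ b := hu.trans hub
  have hA : 1 ≤ 1 + v + v * w := by nlinarith [mul_nonneg hv hw]
  have hQ : 0 ≤ psiDerivPrev n u v w := by unfold psiDerivPrev; positivity
  calc psiDerivSelf n u v w
      = psiDerivPrev n u v w * (u * (1 + u * w + w) / (1 + v + v * w)) := by
        unfold psiDerivSelf psiDerivPrev; field_simp; ring
    _ ≤ psiDerivPrev n u v w * (u * (1 + u * w + w)) := by
        gcongr; exact div_le_self (by positivity) hA
    _ ≤ psiDerivPrev n u v w * (b * (1 + b * c + c)) := by gcongr
    _ = psiDerivPrev n u v w * (b * (1 + c + b * c)) := by ring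

lemma psiDerivNext_le (hu : 0 ≤ u) (hub : u ≤ b) (hv : 0 ≤ v) (hvc : v ≤ c) (hw : 0 ≤ w)
    (hwc : w ≤ c) :
    psiDerivNext n u v w ≤
      (n + 1) * b ^ (n + 1) * c * (1 + c + c ^ 2) ^ n / (1 + b + b * c) ^ (n + 1) := by
  have hb : 0 ≤ b := hu.trans hub
  have hc : 0 ≤ c := hv.trans hvc
  have hZ : 0 < 1 + b + b * v := by positivity
  calc psiDerivNext n u v w
      = (n + 1) * (u / (1 + (1 + v) * u)) ^ (n + 1) * v * (1 + v + v * w) ^ n := by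
        unfold psiDerivNext; rw [div_pow]; ring
    _ ≤ (n + 1) * (b / (1 + (1 + v) * b)) ^ (n + 1) * v * (1 + v + v * w) ^ n := by
        gcongr _ * ?_ ^ _ * _ * _
        exact div_add_mul_le_div_add_mul (q := 1 + v) one_pos (by positivity) hu hub
    _ = (n + 1) * b ^ (n + 1) * (v / (1 + b + b * v)) *
          ((1 + v + v * w) / (1 + b + b * v)) ^ n := by
        simp only [div_pow]; field_simp; ring
    _ ≤ (n + 1) * b ^ (n + 1) * (c / (1 + b + b * c)) *
          ((1 + c + c ^ 2) / (1 + b + b * c)) ^ n := by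
        gcongr _ * ?_ * ?_ ^ _
        · exact div_add_mul_le_div_add_mul (by positivity) hb hv hvc
        · exact one_add_add_mul_div_le_s10 hb hv hvc hwc
    _ = _ := by rw [div_pow]; field_simp; ring

end

theorem stmt_10_general (d : ℕ) (hd : 2 ≤ d) (b c : ℝ)
    (u v w : ℝ) (hu0 : 0 ≤ u) (hub : u ≤ b) (hv0 : 0 ≤ v) (hvc : v ≤ c)
    (hw0 : 0 ≤ w) (hwc : w ≤ c) :
    (d = 2 →
      (d : ℝ) * u ^ (d - 1) * (1 + v + v * w) ^ d / (1 + u + u * v) ^ (d + 1) ≤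
        4 * (d : ℝ) * ((d : ℝ) - 1) ^ (d - 1) * (1 + c + c ^ 2) ^ d /
          (((d : ℝ) + 1) ^ (d + 1) * (1 + c) ^ (d - 1))) ∧
    (3 ≤ d → d ≤ 7 → 1 + 2 * b * (1 + c) ≤ (d : ℝ) →
      (d : ℝ) * u ^ (d - 1) * (1 + v + v * w) ^ d / (1 + u + u * v) ^ (d + 1) ≤
        (d : ℝ) * b ^ (d - 1) * (1 + c + c ^ 2) ^ d /
          ((1 + b) * (1 + b + b * c) ^ d)) ∧
    ((d : ℝ) * u ^ d * (1 + v + v * w) ^ (d - 1) * (1 + u * w + w) / (1 + u + u * v) ^ (d + 1) ≤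
      (d : ℝ) * u ^ (d - 1) * (1 + v + v * w) ^ d / (1 + u + u * v) ^ (d + 1) *
        (b * (1 + c + b * c))) ∧
    ((d : ℝ) * u ^ d * v * (1 + v + v * w) ^ (d - 1) / (1 + u + u * v) ^ d ≤
      (d : ℝ) * b ^ d * c * (1 + c + c ^ 2) ^ (d - 1) / (1 + b + b * c) ^ d) := by
  obtain ⟨n, rfl⟩ : ∃ n, d = n + 1 := ⟨d - 1, by omega⟩
  simp only [Nat.add_sub_cancel, Nat.cast_add_one, add_sub_cancel_right]
  refine ⟨fun _ => ?_, fun _ _ hbc => ?_, ?_, ?_⟩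
  · exact (psiDerivPrev_le_max n (by omega) hu0 hv0 hvc hw0 hwc).trans_eq (by ring)
  · exact psiDerivPrev_le_of_two_mul_le n hu0 hub hv0 hvc hw0 hwc (by linarith)
  · exact psiDerivSelf_le n hu0 hub hv0 hw0 hwc
  · exact psiDerivNext_le n hu0 hub hv0 hvc hw0 hwc

theorem stmt_10 (d : ℕ) (hd : 2 ≤ d) (b c : ℝ)
    (hb : b ∈ Set.Icc (0 : ℝ) 1) (hc : c ∈ Set.Icc (0 : ℝ) 1) (hcb : c ≤ b)
    (u v w : ℝ) (hu0 : 0 ≤ u) (hub : u ≤ b) (hv0 : 0 ≤ v) (hvc : v ≤ c)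
    (hw0 : 0 ≤ w) (hwc : w ≤ c) :
    (d = 2 →
      (d : ℝ) * u ^ (d - 1) * (1 + v + v * w) ^ d / (1 + u + u * v) ^ (d + 1) ≤
        4 * (d : ℝ) * ((d : ℝ) - 1) ^ (d - 1) * (1 + c + c ^ 2) ^ d /
          (((d : ℝ) + 1) ^ (d + 1) * (1 + c) ^ (d - 1))) ∧
    (3 ≤ d → d ≤ 7 → 1 + 2 * b * (1 + c) ≤ (d : ℝ) →
      (d : ℝ) * u ^ (d - 1) * (1 + v + v * w) ^ d / (1 + u + u * v) ^ (d + 1) ≤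
        (d : ℝ) * b ^ (d - 1) * (1 + c + c ^ 2) ^ d /
          ((1 + b) * (1 + b + b * c) ^ d)) ∧
    ((d : ℝ) * u ^ d * (1 + v + v * w) ^ (d - 1) * (1 + u * w + w) / (1 + u + u * v) ^ (d + 1) ≤
      (d : ℝ) * u ^ (d - 1) * (1 + v + v * w) ^ d / (1 + u + u * v) ^ (d + 1) *
        (b * (1 + c + b * c))) ∧
    ((d : ℝ) * u ^ d * v * (1 + v + v * w) ^ (d - 1) / (1 + u + u * v) ^ d ≤
      (d : ℝ) * b ^ d * c * (1 + c + c ^ 2) ^ (d - 1) / (1 + b + b * c) ^ d) :=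
  stmt_10_general d hd b c u v w hu0 hub hv0 hvc hw0 hwc
end

section
/- Let d ≥ 2 be an integer and b ∈ (0,1], and define g_b(x) := b^d · ((1 + x + x²)/(1 + b + b·x))^d for x ≥ 0. Then: (i) g_b is strictly increasing and strictly convex on [0,∞); (ii) g_b has a unique fixed point c₀ in (0,1); (iii) for every x ∈ [0,1), g_b(x) > x if and only if x < c₀; and (iv) for every c ∈ [0,1), the iterates g_b^{(k)}(c) converge to c₀ as k → ∞. -/
open Filter Topology

section aux
variable (d : ℕ) (b : ℝ)

lemma denomPos (hb0 : 0 < b) {x : ℝ} (hx : 0 ≤ x) : 0 < 1 + b + b * x := by nlinarith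

lemma gMap_contAt (hb0 : 0 < b) {x : ℝ} (hx : 0 ≤ x) : ContinuousAt (gMap d b) x := by
  have hne : (1 : ℝ) + b + b * x ≠ 0 := ne_of_gt (denomPos b hb0 hx)
  have h1 : ContinuousAt (fun x : ℝ => 1 + x + x ^ 2) x := by fun_prop
  have h2 : ContinuousAt (fun x : ℝ => 1 + b + b * x) x := by fun_prop
  unfold gMap
  exact continuousAt_const.mul ((h1.div h2 hne).pow d)

lemma gMap_nonneg (hb0 : 0 < b) {x : ℝ} (hx : 0 ≤ x) : 0 ≤ gMap d b x := by
  have hD := denomPos b hb0 hx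
  unfold gMap
  exact mul_nonneg (pow_nonneg hb0.le d) (pow_nonneg (div_nonneg (by nlinarith) hD.le) d)

lemma gMap_mono (hd : 2 ≤ d) (hb0 : 0 < b) : StrictMonoOn (gMap d b) (Set.Ici 0) := by
  intro x hx y hy hxy
  simp only [Set.mem_Ici] at hx hy
  have Dx := denomPos b hb0 hx
  have Dy := denomPos b hb0 hy
  have hbase : (1 + x + x ^ 2) / (1 + b + b * x) < (1 + y + y ^ 2) / (1 + b + b * y) := by
    rw [div_lt_div_iff₀ Dx Dy]
    nlinarith [sub_pos.2 hxy, mul_nonneg (mul_nonneg hb0.le hx) hy, mul_pos (sub_pos.2 hxy) hb0]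
  unfold gMap
  exact mul_lt_mul_of_pos_left
    (pow_lt_pow_left₀ hbase (div_nonneg (by nlinarith) Dx.le) (by omega)) (pow_pos hb0 d)

lemma gMap_convex (hd : 2 ≤ d) (hb0 : 0 < b) : StrictConvexOn ℝ (Set.Ici 0) (gMap d b) := by
  refine ⟨convex_Ici 0, ?_⟩
  intro x hx y hy hxy t s ht hs hts
  simp only [Set.mem_Ici] at hx hy
  simp only [smul_eq_mul]
  have hs' : s = 1 - t := by linarith
  subst hs'
  have Dx := denomPos b hb0 hx
  have Dy := denomPos b hb0 hy
  have hz : 0 ≤ t * x + (1 - t) * y := by positivity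
  have Dz := denomPos b hb0 hz
  have key : 1 / (1 + b + b * (t * x + (1 - t) * y)) <
      t / (1 + b + b * x) + (1 - t) / (1 + b + b * y) := by
    rw [div_add_div _ _ (ne_of_gt Dx) (ne_of_gt Dy), div_lt_div_iff₀ Dz (by positivity)]
    nlinarith [mul_pos (mul_pos ht hs)
      (sq_pos_of_ne_zero (mul_ne_zero (ne_of_gt hb0) (sub_ne_zero.2 hxy)))]
  have hid : t * ((1 + x + x ^ 2) / (1 + b + b * x))
      + (1 - t) * ((1 + y + y ^ 2) / (1 + b + b * y))
      - (1 + (t * x + (1 - t) * y) + (t * x + (1 - t) * y) ^ 2)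
        / (1 + b + b * (t * x + (1 - t) * y))
      = (1 + b + b ^ 2) / b ^ 2 * (t / (1 + b + b * x) + (1 - t) / (1 + b + b * y)
        - 1 / (1 + b + b * (t * x + (1 - t) * y))) := by
    field_simp
    ring
  have hC : (0 : ℝ) < (1 + b + b ^ 2) / b ^ 2 := by positivity
  set A := (1 + x + x ^ 2) / (1 + b + b * x) with hA
  set B := (1 + y + y ^ 2) / (1 + b + b * y) with hB
  set Z := (1 + (t * x + (1 - t) * y) + (t * x + (1 - t) * y) ^ 2)
        / (1 + b + b * (t * x + (1 - t) * y)) with hZ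
  have hZlt : Z < t * A + (1 - t) * B := by nlinarith [mul_pos hC (sub_pos.2 key)]
  have hZ0 : 0 ≤ Z := div_nonneg (by nlinarith) Dz.le
  have hA0 : A ∈ Set.Ici (0 : ℝ) := Set.mem_Ici.2 (div_nonneg (by nlinarith) Dx.le)
  have hB0 : B ∈ Set.Ici (0 : ℝ) := Set.mem_Ici.2 (div_nonneg (by nlinarith) Dy.le)
  have h2 : Z ^ d < (t * A + (1 - t) * B) ^ d := pow_lt_pow_left₀ hZlt hZ0 (by omega)
  have h3 : (t * A + (1 - t) * B) ^ d ≤ t * A ^ d + (1 - t) * B ^ d := by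
    have := (convexOn_pow d).2 hA0 hB0 ht.le hs.le hts
    simpa [smul_eq_mul] using this
  have h4 : Z ^ d < t * A ^ d + (1 - t) * B ^ d := lt_of_lt_of_le h2 h3
  show b ^ d * Z ^ d < t * (b ^ d * A ^ d) + (1 - t) * (b ^ d * B ^ d)
  calc b ^ d * Z ^ d < b ^ d * (t * A ^ d + (1 - t) * B ^ d) :=
        mul_lt_mul_of_pos_left h4 (pow_pos hb0 d)
    _ = t * (b ^ d * A ^ d) + (1 - t) * (b ^ d * B ^ d) := by ring

lemma gMap_one_le (hb0 : 0 < b) (hb1 : b ≤ 1) : gMap d b 1 ≤ 1 := by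
  have h : gMap d b 1 = (b * 3 / (1 + b + b * 1)) ^ d := by
    rw [gMap, ← mul_pow]
    norm_num [mul_div_assoc]
  rw [h]
  have hD := denomPos b hb0 (le_refl 0 |>.trans zero_le_one)
  have hD' : (0:ℝ) < 1 + b + b * 1 := by nlinarith
  refine pow_le_one₀ (div_nonneg (by nlinarith) hD'.le) ?_
  rw [div_le_one hD']
  linarith

lemma gMap_nine (hd : 2 ≤ d) (hb0 : 0 < b) (hb1 : b ≤ 1) :
    gMap d b (9 / 10) < 9 / 10 := by
  have hD : (0:ℝ) < 1 + b + b * (9 / 10) := by nlinarith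
  have h : gMap d b (9 / 10) = (b * (271 / 100) / (1 + b + b * (9 / 10))) ^ d := by
    rw [gMap, ← mul_pow]
    norm_num [mul_div_assoc]
  rw [h]
  set r := b * (271 / 100) / (1 + b + b * (9 / 10)) with hr
  have hr0 : 0 ≤ r := div_nonneg (by nlinarith) hD.le
  have hr1 : r ≤ 271 / 290 := by
    rw [hr, div_le_div_iff₀ hD (by norm_num : (0:ℝ) < 290)]
    ring_nf
    nlinarith
  have hrle1 : r ≤ 1 := hr1.trans (by norm_num)
  calc r ^ d ≤ r ^ 2 := pow_le_pow_of_le_one hr0 hrle1 hd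
    _ ≤ (271 / 290) ^ 2 := by nlinarith
    _ < 9 / 10 := by norm_num

end aux

theorem stmt_12 (d : ℕ) (hd : 2 ≤ d) (b : ℝ) (hb0 : 0 < b) (hb1 : b ≤ 1) :
    StrictMonoOn (gMap d b) (Set.Ici 0) ∧
    StrictConvexOn ℝ (Set.Ici 0) (gMap d b) ∧
    ∃ c₀ ∈ Set.Ioo (0 : ℝ) 1, gMap d b c₀ = c₀ ∧
      (∀ c' ∈ Set.Ioo (0 : ℝ) 1, gMap d b c' = c' → c' = c₀) ∧
      (∀ x : ℝ, 0 ≤ x → x < 1 → (x < c₀ ↔ x < gMap d b x)) ∧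
      (∀ c : ℝ, 0 ≤ c → c < 1 →
        Tendsto (fun k => (gMap d b)^[k] c) atTop (𝓝 c₀)) := by
  have hmono := gMap_mono d b hd hb0
  have hconv := gMap_convex d b hd hb0
  have hg1 := gMap_one_le d b hb0 hb1
  refine ⟨hmono, hconv, ?_⟩
  -- fixed point existence via IVT
  set f := fun x => gMap d b x - x with hf
  have hf0 : 0 < f 0 := by
    simp only [hf, sub_zero]
    rw [show gMap d b 0 = b ^ d * (1 / (1 + b)) ^ d by rw [gMap]; norm_num]
    exact mul_pos (pow_pos hb0 d) (pow_pos (div_pos one_pos (by linarith)) d)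
  have hf9 : f (9 / 10) < 0 := by
    simp only [hf, sub_neg]
    exact gMap_nine d b hd hb0 hb1
  have hcont : ContinuousOn f (Set.Icc 0 (9 / 10)) := by
    apply ContinuousOn.sub _ continuousOn_id
    exact fun x hx => (gMap_contAt d b hb0 hx.1).continuousWithinAt
  have hivt := intermediate_value_Ioo' (by norm_num : (0:ℝ) ≤ 9 / 10) hcont
  have h0mem : (0:ℝ) ∈ Set.Ioo (f (9/10)) (f 0) := ⟨hf9, hf0⟩
  obtain ⟨c₀, hc₀mem, hc₀fix⟩ := hivt h0mem
  have hfix : gMap d b c₀ = c₀ := by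
    have : gMap d b c₀ - c₀ = 0 := hc₀fix
    linarith
  have hc₀0 : 0 < c₀ := hc₀mem.1
  have hc₀1 : c₀ < 1 := hc₀mem.2.trans (by norm_num)
  -- sign lemmas
  have hsign_hi : ∀ x, c₀ < x → x < 1 → gMap d b x < x := by
    intro x h1 h2
    set t := (x - c₀) / (1 - c₀) with ht_def
    have ht0 : 0 < t := div_pos (by linarith) (by linarith)
    have hs0 : 0 < 1 - t := by
      rw [ht_def, sub_pos, div_lt_one (by linarith)]
      linarith
    have hne1 : (1:ℝ) - c₀ ≠ 0 := by intro h; rw [sub_eq_zero] at h; linarith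
    have hxc : (1 - t) * c₀ + t * 1 = x := by
      rw [ht_def]
      field_simp
      ring
    have hk := hconv.2 (Set.mem_Ici.2 hc₀0.le) (Set.mem_Ici.2 zero_le_one)
      (ne_of_lt hc₀1) hs0 ht0 (by ring)
    simp only [smul_eq_mul, hxc] at hk
    have ht1 : t * gMap d b 1 ≤ t * 1 := mul_le_mul_of_nonneg_left hg1 ht0.le
    rw [hfix] at hk
    linarith
  have hsign_lo : ∀ x, 0 ≤ x → x < c₀ → x < gMap d b x := by
    intro x hx0 hxc
    by_contra hcon
    push_neg at hcon
    set t := (c₀ - x) / (1 - x) with ht_def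
    have hx1 : x < 1 := hxc.trans hc₀1
    have ht0 : 0 < t := div_pos (by linarith) (by linarith)
    have hs0 : 0 < 1 - t := by
      rw [ht_def, sub_pos, div_lt_one (by linarith)]
      linarith
    have hne1 : (1:ℝ) - x ≠ 0 := by intro h; rw [sub_eq_zero] at h; linarith
    have hxc' : (1 - t) * x + t * 1 = c₀ := by
      rw [ht_def]
      field_simp
      ring
    have hk := hconv.2 (Set.mem_Ici.2 hx0) (Set.mem_Ici.2 zero_le_one)
      (ne_of_lt hx1) hs0 ht0 (by ring)
    simp only [smul_eq_mul, hxc'] at hk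
    rw [hfix] at hk
    have ht1 : t * gMap d b 1 ≤ t * 1 := mul_le_mul_of_nonneg_left hg1 ht0.le
    have hs1 : (1 - t) * gMap d b x ≤ (1 - t) * x := mul_le_mul_of_nonneg_left hcon hs0.le
    linarith
  refine ⟨c₀, ⟨hc₀0, hc₀1⟩, hfix, ?_, ?_, ?_⟩
  · -- uniqueness
    intro c' hc' hfix'
    by_contra hne
    rcases lt_or_gt_of_ne hne with h | h
    · have := hsign_lo c' hc'.1.le h
      rw [hfix'] at this
      exact lt_irrefl _ this
    · have := hsign_hi c' h hc'.2
      rw [hfix'] at this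
      exact lt_irrefl _ this
  · -- iff
    intro x hx0 hx1
    constructor
    · exact fun h => hsign_lo x hx0 h
    · intro h
      by_contra h'
      push_neg at h'
      rcases eq_or_lt_of_le h' with heq | hlt
      · rw [← heq, hfix] at h
        exact lt_irrefl _ h
      · have := hsign_hi x hlt hx1
        linarith
  · -- convergence
    intro c hc0 hc1
    set a := fun k => (gMap d b)^[k] c with ha
    have hstep : ∀ k, a (k + 1) = gMap d b (a k) := fun k =>
      Function.iterate_succ_apply' (gMap d b) k c
    rcases lt_trichotomy c c₀ with hlt | heq | hgt
    · -- increasing case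
      have hbnd : ∀ k, 0 ≤ a k ∧ a k ≤ c₀ := by
        intro k
        induction k with
        | zero => exact ⟨hc0, hlt.le⟩
        | succ n ih =>
          rw [hstep]
          refine ⟨gMap_nonneg d b hb0 ih.1, ?_⟩
          calc gMap d b (a n) ≤ gMap d b c₀ :=
                hmono.monotoneOn (Set.mem_Ici.2 ih.1) (Set.mem_Ici.2 hc₀0.le) ih.2
            _ = c₀ := hfix
      have hmon : Monotone a := by
        apply monotone_nat_of_le_succ
        intro k
        rw [hstep]
        rcases lt_or_eq_of_le (hbnd k).2 with h | h
        · exact (hsign_lo (a k) (hbnd k).1 h).le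
        · rw [h, hfix, ← h]
      have hbdd : BddAbove (Set.range a) := ⟨c₀, by rintro _ ⟨k, rfl⟩; exact (hbnd k).2⟩
      have hL := tendsto_atTop_ciSup hmon hbdd
      set L := ⨆ k, a k with hLdef
      have hLle : L ≤ c₀ := ciSup_le fun k => (hbnd k).2
      have hL0 : 0 ≤ L := le_trans (hbnd 0).1 (le_ciSup hbdd 0)
      have h1 : Tendsto (fun k => gMap d b (a k)) atTop (𝓝 L) := by
        have := hL.comp (tendsto_add_atTop_nat 1)
        simpa only [Function.comp_def, hstep] using this
      have h2 : Tendsto (fun k => gMap d b (a k)) atTop (𝓝 (gMap d b L)) :=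
        (gMap_contAt d b hb0 hL0).tendsto.comp hL
      have hfixL : gMap d b L = L := tendsto_nhds_unique h2 h1
      have hLeq : L = c₀ := by
        rcases lt_or_eq_of_le hLle with h | h
        · have := hsign_lo L hL0 h
          rw [hfixL] at this
          exact absurd this (lt_irrefl _)
        · exact h
      rw [← hLeq]
      exact hL
    · -- constant case
      have : ∀ k, a k = c₀ := by
        intro k
        rw [ha, heq]
        exact Function.iterate_fixed hfix k
      simp only [ha] at this
      simp only [ha]
      rw [show (fun k => (gMap d b)^[k] c) = fun _ => c₀ from funext this]
      exact tendsto_const_nhds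
    · -- decreasing case
      have hbnd : ∀ k, c₀ ≤ a k ∧ a k ≤ c := by
        intro k
        induction k with
        | zero => exact ⟨hgt.le, le_refl c⟩
        | succ n ih =>
          rw [hstep]
          constructor
          · calc c₀ = gMap d b c₀ := hfix.symm
              _ ≤ gMap d b (a n) :=
                hmono.monotoneOn (Set.mem_Ici.2 hc₀0.le) (Set.mem_Ici.2 (hc₀0.le.trans ih.1)) ih.1
          · rcases lt_or_eq_of_le ih.1 with h | h
            · exact le_trans (hsign_hi (a n) h (lt_of_le_of_lt ih.2 hc1)).le ih.2
            · rw [← h, hfix, h]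
              exact ih.2
      have hant : Antitone a := by
        apply antitone_nat_of_succ_le
        intro k
        rw [hstep]
        rcases lt_or_eq_of_le (hbnd k).1 with h | h
        · exact (hsign_hi (a k) h (lt_of_le_of_lt (hbnd k).2 hc1)).le
        · rw [← h, hfix, h]
      have hbdd : BddBelow (Set.range a) := ⟨c₀, by rintro _ ⟨k, rfl⟩; exact (hbnd k).1⟩
      have hL := tendsto_atTop_ciInf hant hbdd
      set L := ⨅ k, a k with hLdef
      have hLge : c₀ ≤ L := le_ciInf fun k => (hbnd k).1
      have hL1 : L < 1 := lt_of_le_of_lt (ciInf_le hbdd 0) (lt_of_le_of_lt (hbnd 0).2 hc1)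
      have hL0 : 0 ≤ L := hc₀0.le.trans hLge
      have h1 : Tendsto (fun k => gMap d b (a k)) atTop (𝓝 L) := by
        have := hL.comp (tendsto_add_atTop_nat 1)
        simpa only [Function.comp_def, hstep] using this
      have h2 : Tendsto (fun k => gMap d b (a k)) atTop (𝓝 (gMap d b L)) :=
        (gMap_contAt d b hb0 hL0).tendsto.comp hL
      have hfixL : gMap d b L = L := tendsto_nhds_unique h2 h1
      have hLeq : L = c₀ := by
        rcases lt_or_eq_of_le hLge with h | h
        · have := hsign_hi L h hL1
          rw [hfixL] at this
          exact absurd this (lt_irrefl _)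
        · exact h.symm
      rw [← hLeq]
      exact hL
end

section
/- Fix an integer d ≥ 2 and let c ∈ [0,1). Then for every x ∈ S_{0,1,c} and every ε > 0, there exists an integer K such that for all k ≥ K: 0 ≤ ψ^{(k)}(x)_1 ≤ 1 and ψ^{(k)}(x)_n ≤ c_g + ε for all n ≥ 2. -/
/-! ### Auxiliary lemmas -/

noncomputable def Gm (d : ℕ) (t : ℝ) : ℝ := ((1+t+t^2)/(2+t))^d

lemma Gm_nonneg {d : ℕ} {t : ℝ} (ht : 0 ≤ t) : 0 ≤ Gm d t := by
  unfold Gm; positivity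

lemma Gm_lt_one {d : ℕ} (hd : d ≠ 0) {t : ℝ} (ht0 : 0 ≤ t) (ht1 : t < 1) : Gm d t < 1 := by
  unfold Gm
  apply pow_lt_one₀ (by positivity) _ hd
  rw [div_lt_one (by positivity)]
  nlinarith

lemma Gm_mono {d : ℕ} {s t : ℝ} (hs : 0 ≤ s) (hst : s ≤ t) : Gm d s ≤ Gm d t := by
  unfold Gm
  have ht : 0 ≤ t := le_trans hs hst
  apply pow_le_pow_left₀ (by positivity)
  rw [div_le_div_iff₀ (by linarith) (by linarith)]
  nlinarith [mul_nonneg (sub_nonneg.2 hst) (mul_nonneg hs ht), sq_nonneg (t-s),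
    mul_nonneg (sub_nonneg.2 hst) hs]

lemma f_combo (x y a : ℝ) (hx : 0 ≤ x) (hy : 0 ≤ y) (ha : 0 < a) (ha1 : a < 1) :
    a*((1+x+x^2)/(2+x)) + (1-a)*((1+y+y^2)/(2+y)) -
      (1+(a*x+(1-a)*y)+(a*x+(1-a)*y)^2)/(2+(a*x+(1-a)*y))
    = 3*a*(1-a)*(x-y)^2/((2+x)*((2+y)*(2+(a*x+(1-a)*y)))) := by
  have h1 : (0:ℝ) < 2 + x := by linarith
  have h2 : (0:ℝ) < 2 + y := by linarith
  have h3 : (0:ℝ) < 2 + (a*x+(1-a)*y) := by nlinarith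
  field_simp
  ring

lemma Gm_lt_self {d : ℕ} (hd : d ≠ 0) {cg t : ℝ} (hcg0 : 0 < cg) (hcg1 : cg < 1)
    (hfix : Gm d cg = cg) (h1 : cg < t) (h2 : t < 1) : Gm d t < t := by
  have ht0 : 0 < t := lt_trans hcg0 h1
  obtain ⟨a, ha, ha1, hz⟩ : ∃ a : ℝ, 0 < a ∧ a < 1 ∧ a*cg+(1-a)*1 = t := by
    refine ⟨(1-t)/(1-cg), div_pos (by linarith) (by linarith), ?_, ?_⟩
    · rw [div_lt_one (by linarith)]; linarith
    · have hm : (1-t)/(1-cg)*(1-cg) = 1-t := div_mul_cancel₀ _ (by linarith)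
      linear_combination -hm
  have hfcg : 0 ≤ (1+cg+cg^2)/(2+cg) := by positivity
  have hcombo := f_combo cg 1 a hcg0.le zero_le_one ha ha1
  have hkey : (1+t+t^2)/(2+t) < a*((1+cg+cg^2)/(2+cg)) + (1-a)*((1+1+(1:ℝ)^2)/(2+1)) := by
    rw [show (1:ℝ)+t+t^2 = 1+(a*cg+(1-a)*1)+(a*cg+(1-a)*1)^2 by rw [hz],
        show (2:ℝ)+t = 2+(a*cg+(1-a)*1) by rw [hz]]
    have h4 : (0:ℝ) < (cg-1)^2 := by
      nlinarith [mul_pos (show (0:ℝ) < 1-cg by linarith) (show (0:ℝ) < 1-cg by linarith)]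
    have hpos : 0 < 3*a*(1-a)*(cg-1)^2/((2+cg)*((2+1)*(2+(a*cg+(1-a)*1)))) := by
      apply div_pos
      · exact mul_pos (mul_pos (mul_pos (by norm_num) ha) (by linarith)) h4
      · rw [hz]
        exact mul_pos (by linarith) (mul_pos (by norm_num) (by linarith))
    linarith [hcombo]
  have hft : 0 ≤ (1+t+t^2)/(2+t) := div_nonneg (by positivity) (by linarith)
  have step1 : Gm d t < (a*((1+cg+cg^2)/(2+cg)) + (1-a)*((1+1+(1:ℝ)^2)/(2+1)))^d :=
    pow_lt_pow_left₀ hkey hft hd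
  have step2 : (a*((1+cg+cg^2)/(2+cg)) + (1-a)*((1+1+(1:ℝ)^2)/(2+1)))^d ≤
      a*((1+cg+cg^2)/(2+cg))^d + (1-a)*((1+1+(1:ℝ)^2)/(2+1))^d := by
    have h := (convexOn_pow d).2 (Set.mem_Ici.2 hfcg)
      (Set.mem_Ici.2 (by norm_num : (0:ℝ) ≤ (1+1+(1:ℝ)^2)/(2+1))) ha.le
      (by linarith : (0:ℝ) ≤ 1-a) (by ring)
    simpa [smul_eq_mul] using h
  have hone : ((1+1+(1:ℝ)^2)/(2+1))^d = 1 := by norm_num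
  have hGcg : ((1+cg+cg^2)/(2+cg))^d = cg := hfix
  calc Gm d t < _ := step1
    _ ≤ _ := step2
    _ = a*cg + (1-a)*1 := by rw [hone, hGcg]
    _ = t := hz

lemma psi_step {d : ℕ} {t : ℝ} (ht0 : 0 ≤ t) (ht1 : t ≤ 1) {x : ℕ → ℝ}
    (hx : x ∈ Sabc 0 1 t) : psi d x ∈ Sabc 0 1 (Gm d t) := by
  obtain ⟨hpos, -, hx1, hc⟩ := hx
  have hx10 : 0 ≤ x 1 := hpos 1 le_rfl
  have hden1 : (0:ℝ) < 1 + 2 * x 1 := by linarith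
  refine ⟨?_, ?_, ?_, ?_⟩
  · intro n hn
    unfold psi
    rcases Nat.lt_or_ge n 2 with h | h
    · interval_cases n
      · simp only [if_neg one_ne_zero, if_pos rfl]
        have hx2 : 0 ≤ x 2 := hpos 2 (by norm_num)
        exact pow_nonneg (div_nonneg (by nlinarith [mul_nonneg hx10 hx2]) hden1.le) d
    · have h0 : n ≠ 0 := by omega
      have h1 : n ≠ 1 := by omega
      simp only [if_neg h0, if_neg h1]
      have hb : 0 ≤ x (n-1) := hpos (n-1) (by omega)
      have hu : 0 ≤ x n := hpos n (by omega)
      have hv : 0 ≤ x (n+1) := hpos (n+1) (by omega)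
      have : (0:ℝ) < 1 + x (n-1) + x (n-1) * x n := by nlinarith
      positivity
  · unfold psi
    simp only [if_neg one_ne_zero, if_pos rfl]
    have hx2 : 0 ≤ x 2 := hpos 2 (by norm_num)
    exact pow_nonneg (div_nonneg (by nlinarith [mul_nonneg hx10 hx2]) hden1.le) d
  · unfold psi
    simp only [if_neg one_ne_zero, if_pos rfl]
    have hx2 : 0 ≤ x 2 := hpos 2 (by norm_num)
    have hx2t : x 2 ≤ t := hc 2 le_rfl
    apply pow_le_one₀ (by positivity)
    rw [div_le_one hden1]
    nlinarith
  · intro n hn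
    have h0 : n ≠ 0 := by omega
    have h1 : n ≠ 1 := by omega
    unfold psi
    simp only [if_neg h0, if_neg h1]
    have hb0 : 0 ≤ x (n-1) := hpos (n-1) (by omega)
    have hb1 : x (n-1) ≤ 1 := by
      rcases Nat.lt_or_ge n 3 with h | h
      · have : n = 2 := by omega
        subst this; simpa using hx1
      · exact le_trans (hc (n-1) (by omega)) ht1
    have hu0 : 0 ≤ x n := hpos n (by omega)
    have hut : x n ≤ t := hc n hn
    have hv0 : 0 ≤ x (n+1) := hpos (n+1) (by omega)
    have hvt : x (n+1) ≤ t := hc (n+1) (by omega)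
    set b := x (n-1)
    set u := x n
    set v := x (n+1)
    have hD : (0:ℝ) < 1 + b + b * u := by nlinarith
    rw [← mul_pow]
    unfold Gm
    apply pow_le_pow_left₀ (by positivity)
    rw [mul_div_assoc', div_le_div_iff₀ hD (by linarith)]
    nlinarith [mul_nonneg (mul_nonneg hb0 hu0) (sub_nonneg.2 hvt),
      mul_nonneg (sub_nonneg.2 hb1) (show (0:ℝ) ≤ 1+t+t^2 by nlinarith),
      mul_nonneg (mul_nonneg hb0 (show (0:ℝ) ≤ 1+2*t by linarith)) (sub_nonneg.2 hut),
      mul_nonneg (mul_nonneg (mul_nonneg hb0 hu0) (show (0:ℝ) ≤ 2+t by linarith)) (sub_nonneg.2 hvt)]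

theorem stmt_13 (d : ℕ) (hd : 2 ≤ d)
    (cg : ℝ) (hcg : cg ∈ Set.Ioo (0 : ℝ) 1) (hcgfix : gMap d 1 cg = cg)
    (c : ℝ) (hc0 : 0 ≤ c) (hc1 : c < 1) (x : ℕ → ℝ) (hx : x ∈ Sabc 0 1 c)
    (ε : ℝ) (hε : 0 < ε) :
    ∃ K : ℕ, ∀ k, K ≤ k →
      (0 ≤ (psi d)^[k] x 1 ∧ (psi d)^[k] x 1 ≤ 1) ∧
      ∀ n, 2 ≤ n → (psi d)^[k] x n ≤ cg + ε := by
  obtain ⟨hcg0, hcg1⟩ := hcg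
  have hd0 : d ≠ 0 := by omega
  have hGfix : Gm d cg = cg := by
    have h : (1:ℝ) + 1 + 1*cg = 2 + cg := by ring
    rw [gMap, h, one_pow, one_mul] at hcgfix
    exact hcgfix
  set u : ℕ → ℝ := fun k => (Gm d)^[k] c with hu_def
  have husucc : ∀ k, u (k+1) = Gm d (u k) := fun k => Function.iterate_succ_apply' _ _ _
  have hinv : ∀ k, 0 ≤ u k ∧ u k < 1 ∧ (psi d)^[k] x ∈ Sabc 0 1 (u k) := by
    intro k
    induction k with
    | zero => exact ⟨hc0, hc1, hx⟩
    | succ k ih =>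
      obtain ⟨h0, h1, hmem⟩ := ih
      refine ⟨?_, ?_, ?_⟩
      · rw [husucc]; exact Gm_nonneg h0
      · rw [husucc]; exact Gm_lt_one hd0 h0 h1
      · rw [husucc, Function.iterate_succ_apply']
        exact psi_step h0 h1.le hmem
  have hstay : ∀ k, u k ≤ cg + ε → u (k+1) ≤ cg + ε := by
    intro k hk
    rcases le_or_gt (u k) cg with h | h
    · rw [husucc]
      calc Gm d (u k) ≤ Gm d cg := Gm_mono (hinv k).1 h
        _ = cg := hGfix
        _ ≤ cg + ε := by linarith
    · rw [husucc]
      exact le_trans (Gm_lt_self hd0 hcg0 hcg1 hGfix h (hinv k).2.1).le hk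
  have hexists : ∃ K, u K ≤ cg + ε := by
    rcases le_or_gt c (cg + ε) with h | h
    · exact ⟨0, h⟩
    · have hA : Set.Nonempty (Set.Icc (cg+ε) c) := ⟨c, ⟨h.le, le_rfl⟩⟩
      have hcont : ContinuousOn (fun s : ℝ => Gm d s - s) (Set.Icc (cg+ε) c) := by
        unfold Gm
        apply ContinuousOn.sub _ continuousOn_id
        apply ContinuousOn.pow
        apply ContinuousOn.div
        · fun_prop
        · fun_prop
        · intro s hs
          have := hs.1
          exact ne_of_gt (by linarith)
      obtain ⟨m, hmA, hmax⟩ := isCompact_Icc.exists_isMaxOn hA hcont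
      have hm1 : cg < m := lt_of_lt_of_le (by linarith) hmA.1
      have hm2 : m < 1 := lt_of_le_of_lt hmA.2 hc1
      have hδ : 0 < m - Gm d m := by
        have := Gm_lt_self hd0 hcg0 hcg1 hGfix hm1 hm2; linarith
      by_contra hcon
      push_neg at hcon
      have hdec : ∀ k : ℕ, u k ≤ c - k * (m - Gm d m) := by
        intro k
        induction k with
        | zero =>
          have : u 0 = c := rfl
          simp [this]
        | succ k ih =>
          have hkd : (0:ℝ) ≤ (k:ℝ) * (m - Gm d m) := by positivity
          have hmem : u k ∈ Set.Icc (cg+ε) c := ⟨(hcon k).le, by linarith⟩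
          have h5 : Gm d (u k) - u k ≤ Gm d m - m := hmax hmem
          rw [husucc]
          push_cast
          linarith
      obtain ⟨n, hn⟩ := exists_nat_gt ((c - (cg+ε))/(m - Gm d m))
      have h6 := hdec n
      rw [div_lt_iff₀ hδ] at hn
      exact absurd (by linarith : u n < cg + ε) (not_lt.2 (hcon n).le)
  obtain ⟨K, hK⟩ := hexists
  refine ⟨K, ?_⟩
  intro k hk
  have hle : u k ≤ cg + ε := by
    induction k, hk using Nat.le_induction with
    | base => exact hK
    | succ k hk ih => exact hstay k ih
  obtain ⟨-, -, hmem⟩ := hinv k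
  obtain ⟨hp, -, h1, h2⟩ := hmem
  exact ⟨⟨hp 1 le_rfl, h1⟩, fun n hn => le_trans (h2 n hn) hle⟩
end

section
/- (CBC) If κ and κ' are admissible boundary conditions with κ' dominating κ, then for every increasing function Φ : (V → ℤ) → ℝ one has |L(κ)| · Σ_{h ∈ L(κ')} Φ(h) ≥ |L(κ')| · Σ_{h ∈ L(κ)} Φ(h). (FKG) If κ is an admissible boundary condition, then for any two increasing functions Φ, Ψ : (V → ℤ) → ℝ one has |L(κ)| · Σ_{h ∈ L(κ)} Φ(h)·Ψ(h) ≥ (Σ_{h ∈ L(κ)} Φ(h)) · (Σ_{h ∈ L(κ)} Ψ(h)). -/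
/-!
Pointwise `min` and `max` of 1-Lipschitz functions are 1-Lipschitz, and since the boundary sets
are intervals with `κ'` above `κ`, the minimum of `h ∈ L(κ)` and `g ∈ L(κ')` lies in `L(κ)` and
their maximum in `L(κ')`. Both inequalities are then instances of the Ahlswede–Daykin four
functions theorem on the distributive lattice `V → ℤ`, applied to `(Φ, 1, 1, Φ)` for (CBC) and to
`(Φ, Ψ, 1, ΦΨ)` for (FKG), after shifting `Φ` and `Ψ` by constants to make them nonnegative.
-/

/-- The set of 1-Lipschitz integer-valued functions on the vertices of `G`
respecting the boundary condition `κ` on the boundary set `B`. -/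
def LipBC {V : Type*} (G : SimpleGraph V) (B : Set V) (κ : V → Set ℤ) : Set (V → ℤ) :=
  {h | (∀ u v : V, G.Adj u v → |h u - h v| ≤ 1) ∧ ∀ v ∈ B, h v ∈ κ v}

/-- A boundary condition is admissible if the corresponding set of Lipschitz
functions is finite and nonempty. -/
def Admissible {V : Type*} (G : SimpleGraph V) (B : Set V) (κ : V → Set ℤ) : Prop :=
  (LipBC G B κ).Finite ∧ (LipBC G B κ).Nonempty

/-- `κ'` dominates `κ` on the boundary `B`. -/
def Dominates {V : Type*} (B : Set V) (κ κ' : V → Set ℤ) : Prop :=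
  ∀ v ∈ B, (∀ a ∈ κ v, ∃ a' ∈ κ' v, a ≤ a') ∧ (∀ a' ∈ κ' v, ∃ a ∈ κ v, a ≤ a')

open Finset
open scoped FinsetFamily

lemma Monotone.exists_nonneg_add_const_on {α β : Type*} [Preorder α] [AddCommGroup β]
    [LinearOrder β] [IsOrderedAddMonoid β] {f : α → β} (hf : Monotone f) (u : Finset α) :
    ∃ g : α → β, Monotone g ∧ 0 ≤ g ∧ ∃ c, ∀ x ∈ u, f x = g x + c := by
  obtain ⟨c, hc⟩ := (u.image f).bddBelow
  refine ⟨fun x ↦ max (f x) c - c, fun x y hxy ↦ sub_le_sub_right (max_le_max_right c (hf hxy)) c,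
    fun x ↦ sub_nonneg.2 (le_max_right _ _), c, fun x hx ↦ ?_⟩
  simp [max_eq_left (hc (mem_image_of_mem f hx))]

section FourFunctions

variable {α β : Type*} [DistribLattice α] [DecidableEq α]
  [CommRing β] [LinearOrder β] [IsStrictOrderedRing β]

theorem Finset.card_mul_sum_le_card_mul_sum_of_monotone {s t : Finset α}
    (hinf : s ⊼ t ⊆ s) (hsup : s ⊻ t ⊆ t) {f : α → β} (hf : Monotone f) :
    #t * ∑ a ∈ s, f a ≤ #s * ∑ a ∈ t, f a := by
  obtain ⟨g, hg, hg₀, c, hfg⟩ := hf.exists_nonneg_add_const_on (s ∪ t)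
  have key : (∑ a ∈ s, g a) * #t ≤ #s * ∑ a ∈ t, g a :=
    calc (∑ a ∈ s, g a) * #t = (∑ a ∈ s, g a) * ∑ a ∈ t, (1 : α → β) a := by simp
      _ ≤ (∑ a ∈ s ⊼ t, (1 : α → β) a) * ∑ a ∈ s ⊻ t, g a :=
        four_functions_theorem g 1 1 g hg₀ zero_le_one zero_le_one hg₀
          (fun a b ↦ by simpa using hg le_sup_left) s t
      _ ≤ #s * ∑ a ∈ t, g a := by
        simp only [Pi.one_apply, sum_const, nsmul_one]
        exact mul_le_mul (mod_cast card_le_card hinf)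
          (sum_le_sum_of_subset_of_nonneg hsup fun a _ _ ↦ hg₀ a)
          (sum_nonneg fun a _ ↦ hg₀ a) (Nat.cast_nonneg _)
  have hs : ∑ a ∈ s, f a = ∑ a ∈ s, g a + #s * c := by
    rw [sum_congr rfl fun x hx ↦ hfg x (mem_union_left t hx), sum_add_distrib, sum_const,
      nsmul_eq_mul]
  have ht : ∑ a ∈ t, f a = ∑ a ∈ t, g a + #t * c := by
    rw [sum_congr rfl fun x hx ↦ hfg x (mem_union_right s hx), sum_add_distrib, sum_const,
      nsmul_eq_mul]
  rw [hs, ht]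
  linear_combination key

theorem Finset.sum_mul_sum_le_card_mul_sum_of_monotone {s : Finset α}
    (hs : IsSublattice (s : Set α)) {f g : α → β} (hf : Monotone f) (hg : Monotone g) :
    (∑ a ∈ s, f a) * ∑ a ∈ s, g a ≤ #s * ∑ a ∈ s, f a * g a := by
  obtain ⟨f', hf', hf'₀, c, hff'⟩ := hf.exists_nonneg_add_const_on s
  obtain ⟨g', hg', hg'₀, d, hgg'⟩ := hg.exists_nonneg_add_const_on s
  have key : (∑ a ∈ s, f' a) * ∑ a ∈ s, g' a ≤ #s * ∑ a ∈ s, f' a * g' a :=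
    calc (∑ a ∈ s, f' a) * ∑ a ∈ s, g' a
        ≤ (∑ a ∈ s ⊼ s, (1 : α → β) a) * ∑ a ∈ s ⊻ s, f' a * g' a :=
          four_functions_theorem f' g' 1 (fun a ↦ f' a * g' a) hf'₀ hg'₀ zero_le_one
            (fun a ↦ mul_nonneg (hf'₀ a) (hg'₀ a))
            (fun a b ↦ by
              simpa using mul_le_mul (hf' le_sup_left) (hg' le_sup_right) (hg'₀ b) (hf'₀ _))
            s s
      _ ≤ #s * ∑ a ∈ s, f' a * g' a := by
        simp only [Pi.one_apply, sum_const, nsmul_one]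
        exact mul_le_mul (mod_cast card_le_card (infs_subset_iff.2 hs.infClosed))
          (sum_le_sum_of_subset_of_nonneg (sups_subset_iff.2 hs.supClosed)
            fun a _ _ ↦ mul_nonneg (hf'₀ a) (hg'₀ a))
          (sum_nonneg fun a _ ↦ mul_nonneg (hf'₀ a) (hg'₀ a)) (Nat.cast_nonneg _)
  have hF : ∑ a ∈ s, f a = ∑ a ∈ s, f' a + #s * c := by
    rw [sum_congr rfl hff', sum_add_distrib, sum_const, nsmul_eq_mul]
  have hG : ∑ a ∈ s, g a = ∑ a ∈ s, g' a + #s * d := by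
    rw [sum_congr rfl hgg', sum_add_distrib, sum_const, nsmul_eq_mul]
  have hFG : ∑ a ∈ s, f a * g a =
      ∑ a ∈ s, f' a * g' a + d * ∑ a ∈ s, f' a + c * ∑ a ∈ s, g' a + #s * (c * d) := by
    rw [sum_congr rfl fun x hx ↦ by rw [hff' x hx, hgg' x hx]]
    simp only [add_mul, mul_add, sum_add_distrib, ← sum_mul, ← mul_sum, sum_const, nsmul_eq_mul]
    ring
  rw [hF, hG, hFG]
  linear_combination key

end FourFunctions

section LipBC

variable {V : Type*} {G : SimpleGraph V} {B : Set V} {κ κ' : V → Set ℤ} {h g : V → ℤ}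

lemma inf_mem_lipBC (hκ : ∀ v ∈ B, (κ v).OrdConnected) (hdom : Dominates B κ κ')
    (hh : h ∈ LipBC G B κ) (hg : g ∈ LipBC G B κ') : h ⊓ g ∈ LipBC G B κ := by
  refine ⟨fun u v huv ↦ (abs_min_sub_min_le_max _ _ _ _).trans
    (max_le (hh.1 u v huv) (hg.1 u v huv)), fun v hv ↦ ?_⟩
  rcases le_total (h v) (g v) with hle | hle
  · simpa [min_eq_left hle] using hh.2 v hv
  · obtain ⟨a, ha, hag⟩ := (hdom v hv).2 (g v) (hg.2 v hv)
    simpa [min_eq_right hle] using (hκ v hv).out ha (hh.2 v hv) ⟨hag, hle⟩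

lemma sup_mem_lipBC (hκ' : ∀ v ∈ B, (κ' v).OrdConnected) (hdom : Dominates B κ κ')
    (hh : h ∈ LipBC G B κ) (hg : g ∈ LipBC G B κ') : h ⊔ g ∈ LipBC G B κ' := by
  refine ⟨fun u v huv ↦ (abs_max_sub_max_le_max _ _ _ _).trans
    (max_le (hh.1 u v huv) (hg.1 u v huv)), fun v hv ↦ ?_⟩
  rcases le_total (h v) (g v) with hle | hle
  · simpa [max_eq_right hle] using hg.2 v hv
  · obtain ⟨a', ha', hha⟩ := (hdom v hv).1 (h v) (hh.2 v hv)
    simpa [max_eq_left hle] using (hκ' v hv).out (hg.2 v hv) ha' ⟨hle, hha⟩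

lemma dominates_refl (B : Set V) (κ : V → Set ℤ) : Dominates B κ κ :=
  fun _ _ ↦ ⟨fun a ha ↦ ⟨a, ha, le_rfl⟩, fun a ha ↦ ⟨a, ha, le_rfl⟩⟩

end LipBC

theorem stmt_19 {V : Type*} [Fintype V] (G : SimpleGraph V) (B : Set V)
    (κ κ' : V → Set ℤ)
    (hκI : ∀ v ∈ B, (κ v).Nonempty ∧ (κ v).OrdConnected)
    (hκ'I : ∀ v ∈ B, (κ' v).Nonempty ∧ (κ' v).OrdConnected)
    (hκ : Admissible G B κ) (hκ' : Admissible G B κ')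
    (hdom : Dominates B κ κ') :
    (∀ Φ : (V → ℤ) → ℝ, Monotone Φ →
      (Nat.card (LipBC G B κ') : ℝ) * ∑ᶠ h ∈ LipBC G B κ, Φ h ≤
        (Nat.card (LipBC G B κ) : ℝ) * ∑ᶠ h ∈ LipBC G B κ', Φ h) ∧
    (∀ Φ Ψ : (V → ℤ) → ℝ, Monotone Φ → Monotone Ψ →
      (∑ᶠ h ∈ LipBC G B κ, Φ h) * ∑ᶠ h ∈ LipBC G B κ, Ψ h ≤
        (Nat.card (LipBC G B κ) : ℝ) * ∑ᶠ h ∈ LipBC G B κ, Φ h * Ψ h) := by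
  classical
  have hκO : ∀ v ∈ B, (κ v).OrdConnected := fun v hv ↦ (hκI v hv).2
  have hκ'O : ∀ v ∈ B, (κ' v).OrdConnected := fun v hv ↦ (hκ'I v hv).2
  obtain ⟨hfin, -⟩ := hκ
  obtain ⟨hfin', -⟩ := hκ'
  simp only [finsum_mem_eq_finite_toFinset_sum _ hfin, finsum_mem_eq_finite_toFinset_sum _ hfin',
    Nat.card_eq_card_finite_toFinset hfin, Nat.card_eq_card_finite_toFinset hfin']
  refine ⟨fun Φ hΦ ↦ card_mul_sum_le_card_mul_sum_of_monotone ?_ ?_ hΦ,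
    fun Φ Ψ hΦ hΨ ↦ sum_mul_sum_le_card_mul_sum_of_monotone ⟨?_, ?_⟩ hΦ hΨ⟩
  · simpa [infs_subset_iff] using fun h hh g hg ↦ inf_mem_lipBC (G := G) hκO hdom hh hg
  · simpa [sups_subset_iff] using fun h hh g hg ↦ sup_mem_lipBC (G := G) hκ'O hdom hh hg
  · simpa [SupClosed] using fun h hh g hg ↦
      sup_mem_lipBC (G := G) hκO (dominates_refl B κ) hh hg
  · simpa [InfClosed] using fun h hh g hg ↦
      inf_mem_lipBC (G := G) hκO (dominates_refl B κ) hh hg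
end
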